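/- arXiv:1810.11358 — 3 statements merged into one kernel-verified Lean document; each statement's English description precedes it below -/
import Mathlib

section
/- Let A ∈ R^{n×n} be nonsingular and suppose that for some k ∈ {1,...,n-1} all k×k minors of A are nonzero and have the same sign. Then all (n-k)×(n-k) minors of the unsigned adjugate D adj(A) D^{-1} (where D is the alternating-sign diagonal matrix) are nonzero and have the same sign. -/
open Matrix

/-- Number of sign changes in a list of reals: count of consecutive pairs with negative product. -/
noncomputable def signChanges (l : List ℝ) : ℕ :=
  ((l.zip l.tail).filter (fun p => decide (p.1 * p.2 < 0))).length

/-- s^-: number of sign changes after deleting all zero entries. -/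
noncomputable def sMinus {n : ℕ} (y : Fin n → ℝ) : ℕ :=
  signChanges ((List.ofFn y).filter (fun a => decide (a ≠ 0)))

/-- Vectors obtained from `y` by replacing each zero entry with `+1` or `-1`. -/
def completions {n : ℕ} (y : Fin n → ℝ) : Set (Fin n → ℝ) :=
  {z | ∀ i, (y i ≠ 0 ∧ z i = y i) ∨ (y i = 0 ∧ (z i = 1 ∨ z i = -1))}

/-- s^+: maximal number of sign changes over all replacements of zero entries by ±1. -/
noncomputable def sPlus {n : ℕ} (y : Fin n → ℝ) : ℕ :=
  sSup ((fun z => signChanges (List.ofFn z)) '' completions y)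

/-- The alternating-sign diagonal matrix with diagonal (1, -1, 1, ...). -/
noncomputable def Dalt (n : ℕ) : Matrix (Fin n) (Fin n) ℝ :=
  Matrix.diagonal (fun i => (-1 : ℝ) ^ (i : ℕ))

/-- All k×k minors of A are nonzero with sign ε. -/
def minorsSign {n : ℕ} (k : ℕ) (A : Matrix (Fin n) (Fin n) ℝ) (ε : ℝ) : Prop :=
  ∀ r c : Fin k → Fin n, StrictMono r → StrictMono c →
    0 < ε * (A.submatrix r c).det

/-- A is strictly sign-regular of order k. -/
def IsSSR {n : ℕ} (k : ℕ) (A : Matrix (Fin n) (Fin n) ℝ) : Prop :=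
  ∃ ε : ℝ, (ε = 1 ∨ ε = -1) ∧ minorsSign k A ε

/-!
Up to the checkerboard signs removed by conjugating with `Dalt n`, the adjugate is
`det A • A⁻¹`. Jacobi's identity expresses the minor of `A⁻¹` on rows `r` and columns `c` as
`(-1) ^ (Σ r + Σ c) * det A[cᶜ, rᶜ] / det A`, so every `(n - k)`-minor of
`Dalt n * adj A * Dalt n` is `det A ^ (n - k - 1)` times a `k`-minor of `A`; the common sign is
`ε * sign (det A) ^ (n - k - 1)`.

Jacobi's identity follows by taking determinants in
`C * [[(C⁻¹)₁₁, 0], [(C⁻¹)₂₁, 1]] = [[1, C₁₂], [0, C₂₂]]`, where `C` is `A` with its rows listed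
as `c, cᶜ` and its columns as `r, rᶜ`. The permutation listing `s, sᶜ` has sign
`(-1) ^ (Σ s + Σ_{i<p} i)`: moving an element of `s` down by one step (an adjacent transposition)
flips the sign and lowers `Σ s` by one, and when no such move is possible `s` is `{0, …, p - 1}`.
-/

open Finset Equiv

theorem Matrix.det_mul_det_inv_toBlocks₁₁ {m o R : Type*} [Fintype m] [Fintype o]
    [DecidableEq m] [DecidableEq o] [CommRing R] (C : Matrix (m ⊕ o) (m ⊕ o) R)
    (hC : IsUnit C.det) : C.det * (C⁻¹).toBlocks₁₁.det = C.toBlocks₂₂.det := by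
  have hCC (i j) : (C * C⁻¹) i j = (1 : Matrix _ _ R) i j := by rw [C.mul_nonsing_inv hC]
  have key : C * fromBlocks (C⁻¹).toBlocks₁₁ 0 (C⁻¹).toBlocks₂₁ 1
      = fromBlocks 1 C.toBlocks₁₂ 0 C.toBlocks₂₂ := by
    ext (i | i) (j | j) <;>
      simp [mul_apply, Fintype.sum_sum_type, one_apply, toBlocks₁₁, toBlocks₁₂, toBlocks₂₁,
        toBlocks₂₂]
    · simpa [mul_apply, Fintype.sum_sum_type, one_apply] using hCC (.inl i) (.inl j)
    · simpa [mul_apply, Fintype.sum_sum_type] using hCC (.inr i) (.inl j)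
  simpa [det_fromBlocks_zero₁₂, det_fromBlocks_zero₂₁] using congrArg det key

theorem Fin.swap_lt_swap_of_succ_eq {n : ℕ} {u v x y : Fin n} (huv : (v : ℕ) + 1 = u)
    (hxy : x < y) (hne : ¬(x = v ∧ y = u)) : swap u v x < swap u v y := by
  rw [swap_apply_def, swap_apply_def]
  simp only [Fin.lt_def, Fin.ext_iff] at *
  split_ifs <;> omega

theorem Finset.orderEmbOfFin_eq_swap_orderEmbOfFin {n p : ℕ} {u v : Fin n} {s t : Finset (Fin n)}
    (hs : #s = p) (ht : #t = p) (huv : (v : ℕ) + 1 = u) (hvu : ¬(v ∈ s ∧ u ∈ s))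
    (hst : ∀ x ∈ s, swap u v x ∈ t) (i : Fin p) :
    t.orderEmbOfFin ht i = swap u v (s.orderEmbOfFin hs i) := by
  refine congrFun (orderEmbOfFin_unique ht (fun i => hst _ (orderEmbOfFin_mem s hs i))
    fun i j hij => ?_).symm i
  refine Fin.swap_lt_swap_of_succ_eq huv ((s.orderEmbOfFin hs).strictMono hij) ?_
  rintro ⟨hi, hj⟩
  exact hvu ⟨hi ▸ orderEmbOfFin_mem s hs i, hj ▸ orderEmbOfFin_mem s hs j⟩

theorem finSumEquivOfFinset_map_swap {n p q : ℕ} {u v : Fin n} {s : Finset (Fin n)}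
    (hs : #s = p) (hsc : #sᶜ = q) (hu : u ∈ s) (hv : v ∉ s) (huv : (v : ℕ) + 1 = u)
    (ht : #(s.map (swap u v).toEmbedding) = p) (htc : #(s.map (swap u v).toEmbedding)ᶜ = q) :
    finSumEquivOfFinset ht htc = (finSumEquivOfFinset hs hsc).trans (swap u v) := by
  ext (i | i) : 1
  · refine orderEmbOfFin_eq_swap_orderEmbOfFin hs ht huv (fun h => hv h.1) (fun x hx => ?_) i
    simpa [mem_map_equiv] using hx
  · refine orderEmbOfFin_eq_swap_orderEmbOfFin hsc htc huv (fun h => (mem_compl.1 h.2) hu)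
      (fun x hx => ?_) i
    simpa [mem_map_equiv] using hx

theorem Fin.isLowerSet_of_pred_mem {n : ℕ} {s : Set (Fin n)}
    (h : ∀ u ∈ s, ∀ v : Fin n, (v : ℕ) + 1 = u → v ∈ s) : IsLowerSet s := by
  intro x y hyx hx
  obtain ⟨d, hd⟩ : ∃ d, (x : ℕ) = y + d := ⟨x - y, by rw [Fin.le_def] at hyx; omega⟩
  induction d generalizing x with
  | zero => rwa [show y = x from Fin.ext hd.symm]
  | succ d ih =>
    exact ih (x := ⟨y + d, by have := x.isLt; omega⟩) (Fin.le_def.2 (by simp))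
      (h x hx _ (by simp [hd]; omega)) rfl

theorem Fin.mem_iff_val_lt_of_isLowerSet {n p : ℕ} {s : Finset (Fin n)} (hs : #s = p)
    (hl : IsLowerSet (s : Set (Fin n))) (x : Fin n) : x ∈ s ↔ (x : ℕ) < p := by
  constructor
  · intro hx
    have : Iic x ⊆ s := fun y hy => hl (mem_Iic.1 hy) hx
    simpa [hs] using card_le_card this
  · intro hxp
    by_contra hx
    have : s ⊆ Iio x := fun y hy => mem_Iio.2 (lt_of_not_ge fun hxy => hx (hl hxy hy))
    have := card_le_card this
    simp [hs] at this
    omega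

section

variable {n p q : ℕ}

def shufflePerm (hpq : p + q = n) {s : Finset (Fin n)} (hs : #s = p) (hsc : #sᶜ = q) :
    Perm (Fin n) :=
  (finSumFinEquiv.trans (finCongr hpq)).symm.trans (finSumEquivOfFinset hs hsc)

theorem finSumEquivOfFinset_of_isLowerSet (hpq : p + q = n) {s : Finset (Fin n)} (hs : #s = p)
    (hsc : #sᶜ = q) (hl : IsLowerSet (s : Set (Fin n))) :
    finSumEquivOfFinset hs hsc = finSumFinEquiv.trans (finCongr hpq) := by
  have hmem := Fin.mem_iff_val_lt_of_isLowerSet hs hl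
  ext (i | i) : 1
  · refine congrFun (orderEmbOfFin_unique hs (f := fun i => finCongr hpq (Fin.castAdd q i))
      (fun i => (hmem _).2 (by simp)) fun _ _ h => h).symm i
  · refine congrFun (orderEmbOfFin_unique hsc (f := fun i => finCongr hpq (Fin.natAdd p i))
      (fun i => mem_compl.2 fun h => by simpa using (hmem _).1 h)
      fun _ _ h => Nat.add_lt_add_left h p).symm i

theorem Fin.sum_val_map_swap_add_one {u v : Fin n} {s : Finset (Fin n)} (hu : u ∈ s) (hv : v ∉ s)
    (huv : (v : ℕ) + 1 = u) :
    ∑ x ∈ s.map (swap u v).toEmbedding, (x : ℕ) + 1 = ∑ x ∈ s, (x : ℕ) := by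
  have hfix : ∀ x ∈ s.erase u, ((swap u v x : Fin n) : ℕ) = x := fun x hx => by
    rw [swap_apply_of_ne_of_ne (ne_of_mem_erase hx) (ne_of_mem_of_not_mem (mem_of_mem_erase hx) hv)]
  rw [sum_map, ← add_sum_erase s _ hu, ← add_sum_erase s _ hu]
  simp only [Equiv.toEmbedding_apply, swap_apply_left, sum_congr rfl hfix]
  rw [← huv, add_right_comm]

theorem sign_shufflePerm (hpq : p + q = n) {s : Finset (Fin n)} (hs : #s = p) (hsc : #sᶜ = q) :
    Perm.sign (shufflePerm hpq hs hsc) = (-1) ^ (∑ x ∈ s, (x : ℕ) + ∑ i : Fin p, (i : ℕ)) := by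
  induction hN : ∑ x ∈ s, (x : ℕ) using Nat.strong_induction_on generalizing s with
  | _ N ih =>
  by_cases hadj : ∃ u ∈ s, ∃ v ∉ s, (v : ℕ) + 1 = u
  · obtain ⟨u, hu, v, hv, huv⟩ := hadj
    have ht : #(s.map (swap u v).toEmbedding) = p := by rw [card_map, hs]
    have htc : #(s.map (swap u v).toEmbedding)ᶜ = q := by
      rw [card_compl, ht, Fintype.card_fin]; omega
    have hsum := Fin.sum_val_map_swap_add_one hu hv huv
    have hperm : shufflePerm hpq ht htc = swap u v * shufflePerm hpq hs hsc := by
      rw [shufflePerm, shufflePerm, finSumEquivOfFinset_map_swap hs hsc hu hv huv]; rfl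
    have hne : u ≠ v := fun h => hv (h ▸ hu)
    have hsign := ih _ (by omega) ht htc rfl
    rw [hperm, Perm.sign_mul, Perm.sign_swap hne] at hsign
    rw [← hN, ← hsum, add_right_comm, pow_succ, ← hsign]
    simp
  · have hl : IsLowerSet (s : Set (Fin n)) :=
      Fin.isLowerSet_of_pred_mem fun u hu v huv => by_contra fun hv => hadj ⟨u, hu, v, hv, huv⟩
    have hsum : ∑ x ∈ s, (x : ℕ) = ∑ i : Fin p, (i : ℕ) := by
      rw [← map_orderEmbOfFin_univ s hs, sum_map]
      refine sum_congr rfl fun i _ => ?_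
      simp [← finSumEquivOfFinset_inl hs hsc, finSumEquivOfFinset_of_isLowerSet hpq hs hsc hl]
    rw [shufflePerm, finSumEquivOfFinset_of_isLowerSet hpq hs hsc hl, symm_trans_self, ← hN, hsum,
      ← two_mul, pow_mul]
    simp

theorem Matrix.det_submatrix_eq_sign_shufflePerm_mul_det {R : Type*} [CommRing R]
    (hpq : p + q = n) (A : Matrix (Fin n) (Fin n) R) {r c : Finset (Fin n)} (hr : #r = p)
    (hrc : #rᶜ = q) (hc : #c = p) (hcc : #cᶜ = q) :
    (A.submatrix (finSumEquivOfFinset hc hcc) (finSumEquivOfFinset hr hrc)).det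
      = Perm.sign (shufflePerm hpq hc hcc) * Perm.sign (shufflePerm hpq hr hrc) * A.det := by
  have : A.submatrix (finSumEquivOfFinset hc hcc) (finSumEquivOfFinset hr hrc)
      = ((A.submatrix (shufflePerm hpq hc hcc) id).submatrix id (shufflePerm hpq hr hrc)).submatrix
          (finSumFinEquiv.trans (finCongr hpq)) (finSumFinEquiv.trans (finCongr hpq)) := by
    ext i j; simp [shufflePerm]
  rw [this, det_submatrix_equiv_self, det_permute', det_permute, mul_left_comm, mul_assoc]

theorem Matrix.det_submatrix_inv {R : Type*} [CommRing R] (hpq : p + q = n)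
    (A : Matrix (Fin n) (Fin n) R) (hA : IsUnit A.det) {r c : Finset (Fin n)} (hr : #r = p)
    (hrc : #rᶜ = q) (hc : #c = p) (hcc : #cᶜ = q) :
    (-1) ^ (∑ x ∈ r, (x : ℕ) + ∑ x ∈ c, (x : ℕ)) * A.det
        * (A⁻¹.submatrix (r.orderEmbOfFin hr) (c.orderEmbOfFin hc)).det
      = (A.submatrix (cᶜ.orderEmbOfFin hcc) (rᶜ.orderEmbOfFin hrc)).det := by
  set C := A.submatrix (finSumEquivOfFinset hc hcc) (finSumEquivOfFinset hr hrc)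
  have hdetC : C.det = (-1) ^ (∑ x ∈ r, (x : ℕ) + ∑ x ∈ c, (x : ℕ)) * A.det := by
    rw [det_submatrix_eq_sign_shufflePerm_mul_det hpq A hr hrc hc hcc, sign_shufflePerm,
      sign_shufflePerm]
    push_cast
    rw [← pow_add, add_add_add_comm, ← two_mul, pow_add _ _ (2 * _), pow_mul]
    simp [add_comm]
  have hCu : IsUnit C.det := hdetC ▸ (isUnit_one.neg.pow _).mul hA
  have h11 : (C⁻¹).toBlocks₁₁ = A⁻¹.submatrix (r.orderEmbOfFin hr) (c.orderEmbOfFin hc) := by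
    rw [inv_submatrix_equiv]; rfl
  rw [← hdetC, ← h11]
  exact C.det_mul_det_inv_toBlocks₁₁ hCu

theorem Finset.exists_orderEmbOfFin_eq {α : Type*} [LinearOrder α] {r : Fin p → α}
    (hr : StrictMono r) : ∃ (s : Finset α) (hs : #s = p), ⇑(s.orderEmbOfFin hs) = r :=
  ⟨univ.map ⟨r, hr.injective⟩, by simp,
    (orderEmbOfFin_unique _ (fun i => mem_map_of_mem _ (mem_univ i)) hr).symm⟩

theorem Dalt_mul_Dalt : Dalt n * Dalt n = 1 := by
  simp [Dalt, ← mul_pow]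

theorem det_submatrix_Dalt_mul_mul_inv (M : Matrix (Fin n) (Fin n) ℝ) (r c : Fin p → Fin n) :
    ((Dalt n * M * (Dalt n)⁻¹).submatrix r c).det
      = (-1) ^ (∑ i, (r i : ℕ) + ∑ j, (c j : ℕ)) * (M.submatrix r c).det := by
  have : (Dalt n * M * (Dalt n)⁻¹).submatrix r c
      = diagonal (fun i => (-1 : ℝ) ^ (r i : ℕ)) * M.submatrix r c
        * diagonal (fun j => (-1 : ℝ) ^ (c j : ℕ)) := by
    rw [inv_eq_right_inv Dalt_mul_Dalt]
    ext i j
    simp [Dalt, mul_diagonal, diagonal_mul]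
  rw [this, det_mul, det_mul, det_diagonal, det_diagonal, prod_pow_eq_pow_sum,
    prod_pow_eq_pow_sum, pow_add]
  ring

theorem det_submatrix_Dalt_adjugate (hpq : p + q = n) (hp : p ≠ 0)
    (A : Matrix (Fin n) (Fin n) ℝ) (hA : A.det ≠ 0) {r c : Finset (Fin n)} (hr : #r = p)
    (hrc : #rᶜ = q) (hc : #c = p) (hcc : #cᶜ = q) :
    ((Dalt n * A.adjugate * (Dalt n)⁻¹).submatrix (r.orderEmbOfFin hr) (c.orderEmbOfFin hc)).det
      = A.det ^ (p - 1) * (A.submatrix (cᶜ.orderEmbOfFin hcc) (rᶜ.orderEmbOfFin hrc)).det := by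
  have hsum (s : Finset (Fin n)) (hs : #s = p) :
      ∑ i, (s.orderEmbOfFin hs i : ℕ) = ∑ x ∈ s, (x : ℕ) := by
    conv_rhs => rw [← map_orderEmbOfFin_univ s hs, sum_map]
    rfl
  have hadj : A.adjugate = A.det • A⁻¹ := by
    rw [Matrix.inv_def, smul_smul, Ring.inverse_eq_inv, mul_inv_cancel₀ hA, one_smul]
  rw [← det_submatrix_inv hpq A (isUnit_iff_ne_zero.2 hA) hr hrc hc hcc,
    det_submatrix_Dalt_mul_mul_inv, hadj, submatrix_smul, Pi.smul_apply, Pi.smul_apply, det_smul,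
    hsum, hsum, Fintype.card_fin, ← pow_sub_mul_pow _ (Nat.one_le_iff_ne_zero.2 hp), pow_one]
  ring

theorem IsSSR.of_det_submatrix_eq {k l : ℕ} {A B : Matrix (Fin n) (Fin n) ℝ} {a : ℝ} (ha : a ≠ 0)
    (hA : IsSSR k A)
    (h : ∀ r c : Fin l → Fin n, StrictMono r → StrictMono c → ∃ r' c' : Fin k → Fin n,
      StrictMono r' ∧ StrictMono c' ∧ (B.submatrix r c).det = a * (A.submatrix r' c').det) :
    IsSSR l B := by
  obtain ⟨ε, hε, hmin⟩ := hA
  refine ⟨ε * SignType.sign a, ?_, fun r c hr hc => ?_⟩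
  · rcases ha.lt_or_gt with ha | ha <;> rcases hε with rfl | rfl <;> simp [ha]
  · obtain ⟨r', c', hr', hc', hdet⟩ := h r c hr hc
    rw [hdet, show ε * SignType.sign a * (a * (A.submatrix r' c').det)
      = ε * (A.submatrix r' c').det * (SignType.sign a * a) by ring, sign_mul_self]
    exact mul_pos (hmin r' c' hr' hc') (abs_pos.2 ha)

end

theorem stmt2 {n k : ℕ} (A : Matrix (Fin n) (Fin n) ℝ) (hA : A.det ≠ 0)
    (hk1 : 1 ≤ k) (hk2 : k ≤ n - 1) (hssr : IsSSR k A) :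
    IsSSR (n - k) (Dalt n * A.adjugate * (Dalt n)⁻¹) := by
  have hpq : n - k + k = n := by omega
  refine hssr.of_det_submatrix_eq (pow_ne_zero (n - k - 1) hA) fun _ _ hrmono hcmono => ?_
  obtain ⟨r, hr, rfl⟩ := exists_orderEmbOfFin_eq hrmono
  obtain ⟨c, hc, rfl⟩ := exists_orderEmbOfFin_eq hcmono
  have hrc : #rᶜ = k := by rw [card_compl, hr, Fintype.card_fin]; omega
  have hcc : #cᶜ = k := by rw [card_compl, hc, Fintype.card_fin]; omega
  exact ⟨_, _, (orderEmbOfFin _ hcc).strictMono, (orderEmbOfFin _ hrc).strictMono,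
    det_submatrix_Dalt_adjugate hpq (by omega) A hA hr hrc hc hcc⟩
end

section
/- Let U ∈ R^{n×m} with n > m. Then the following are equivalent: (i) for every nonzero x ∈ R^m, s^+(Ux) ≤ m-1; (ii) all m×m minors U(i_1,...,i_m | 1,...,m) with 1 ≤ i_1 < ... < i_m ≤ n are nonzero and have the same sign. -/
open Matrix Finset

-- sign helpers
lemma posmul {a b c : ℝ} (h1 : 0 < a * b) (h2 : 0 < b * c) : 0 < a * c := by
  have hb : b ≠ 0 := by rintro rfl; simp at h1
  nlinarith [sq_pos_of_ne_zero hb, mul_pos h1 h2]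

lemma negmul {a b c : ℝ} (h1 : 0 < a * b) (h2 : b * c < 0) : a * c < 0 := by
  have hb : b ≠ 0 := by rintro rfl; simp at h1
  nlinarith [sq_pos_of_ne_zero hb, mul_pos_of_neg_of_neg h2 h2]

lemma posdiv {x y : ℝ} (h : 0 < x * y) (hy : 0 < y) : 0 < x := by
  rcases mul_pos_iff.mp h with ⟨hx, _⟩ | ⟨_, hy'⟩
  · exact hx
  · linarith

-- completions
lemma completions_nonempty {n : ℕ} (y : Fin n → ℝ) :
    (fun i => if y i = 0 then (1:ℝ) else y i) ∈ completions y := by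
  intro i
  by_cases h : y i = 0
  · exact Or.inr ⟨h, Or.inl (by simp [h])⟩
  · exact Or.inl ⟨h, by simp [h]⟩

lemma completions_ne_zero {n : ℕ} {y z : Fin n → ℝ} (hz : z ∈ completions y) (i : Fin n) :
    z i ≠ 0 := by
  rcases hz i with ⟨h, he⟩ | ⟨_, he | he⟩ <;> rw [he] <;> first | exact h | norm_num

lemma completions_eq {n : ℕ} {y z : Fin n → ℝ} (hz : z ∈ completions y) {i : Fin n}
    (h : y i ≠ 0) : z i = y i := by
  rcases hz i with ⟨_, he⟩ | ⟨h0, _⟩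
  · exact he
  · exact absurd h0 h

lemma signChanges_le_length (l : List ℝ) : signChanges l ≤ l.length := by
  unfold signChanges
  calc ((l.zip l.tail).filter _).length ≤ (l.zip l.tail).length := List.length_filter_le _ _
  _ ≤ l.length := by rw [List.length_zip]; omega

lemma sPlus_bdd {n : ℕ} (y : Fin n → ℝ) :
    BddAbove ((fun z => signChanges (List.ofFn z)) '' completions y) := by
  refine ⟨n, ?_⟩
  rintro k ⟨z, _, rfl⟩
  simpa using signChanges_le_length (List.ofFn z)

lemma le_sPlus {n : ℕ} {y z : Fin n → ℝ} (hz : z ∈ completions y) :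
    signChanges (List.ofFn z) ≤ sPlus y :=
  le_csSup (sPlus_bdd y) ⟨z, hz, rfl⟩

lemma sPlus_le_iff {n : ℕ} (y : Fin n → ℝ) (k : ℕ) :
    sPlus y ≤ k ↔ ∀ z ∈ completions y, signChanges (List.ofFn z) ≤ k := by
  rw [sPlus, csSup_le_iff (sPlus_bdd y) ⟨_, ⟨_, completions_nonempty y, rfl⟩⟩]
  constructor
  · intro h z hz; exact h _ ⟨z, hz, rfl⟩
  · rintro h _ ⟨z, hz, rfl⟩; exact h z hz

lemma signChanges_cons₂ (a b : ℝ) (l : List ℝ) :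
    signChanges (a :: b :: l) = (if a * b < 0 then 1 else 0) + signChanges (b :: l) := by
  simp only [signChanges, List.tail_cons, List.zip_cons_cons, List.filter]
  by_cases h : a * b < 0 <;> simp [h, List.zip, Nat.add_comm]

lemma signChanges_ofFn (n : ℕ) (V : ℕ → ℝ) :
    signChanges (List.ofFn (fun i : Fin n => V i.val)) =
      ((range (n-1)).filter (fun k => V k * V (k+1) < 0)).card := by
  induction n generalizing V with
  | zero => simp [signChanges]
  | succ n ih =>
    cases n with
    | zero => simp [signChanges]
    | succ n =>
      rw [List.ofFn_succ, List.ofFn_succ]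
      have hshape : (List.ofFn fun i : Fin n =>
          V ((i.succ.succ : Fin (n+2)).val)) = List.ofFn (fun i : Fin n => (fun k => V (k+2)) i.val) := by
        congr 1
      rw [signChanges_cons₂]
      have h2 : (V (((0:Fin (n+1)).succ : Fin (n+2)).val) :: List.ofFn fun i : Fin n => V ((i.succ.succ : Fin (n+2)).val))
          = List.ofFn (fun i : Fin (n+1) => (fun k => V (k+1)) i.val) := by
        rw [List.ofFn_succ]
        congr 1
      rw [h2, ih (fun k => V (k+1))]
      have key : (if V 0 * V 1 < 0 then 1 else 0) + ((range n).filter (fun k => V (k+1) * V (k+1+1) < 0)).card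
          = ((range (n+1)).filter (fun k => V k * V (k+1) < 0)).card := by
        rw [Finset.card_filter, Finset.card_filter, Finset.sum_range_succ', add_comm]
      simpa using key

open scoped Classical

def Yext {n : ℕ} (y : Fin n → ℝ) : ℕ → ℝ := fun k => if h : k < n then y ⟨k, h⟩ else 1

lemma Yext_exists {n : ℕ} (y : Fin n → ℝ) : ∃ k, Yext y k ≠ 0 :=
  ⟨n, by simp [Yext]⟩

noncomputable def q0 {n : ℕ} (y : Fin n → ℝ) : ℕ := Nat.find (Yext_exists y)

noncomputable def FG {n : ℕ} (y : Fin n → ℝ) (k : ℕ) : ℕ :=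
  Nat.findGreatest (fun j => Yext y j ≠ 0) k

noncomputable def Wc {n : ℕ} (y : Fin n → ℝ) : ℕ → ℝ := fun k =>
  if Yext y k ≠ 0 then Yext y k
  else if k < q0 y then Real.sign (Yext y (q0 y)) * (-1)^(q0 y - k)
  else Real.sign (Yext y (FG y k)) * (-1)^(k - FG y k)

section W
variable {n : ℕ} {y : Fin n → ℝ}

lemma Yext_lt (k : ℕ) (h : k < n) : Yext y k = y ⟨k, h⟩ := dif_pos h

lemma q0_spec : Yext y (q0 y) ≠ 0 := Nat.find_spec (Yext_exists y)

lemma q0_min {j : ℕ} (h : j < q0 y) : Yext y j = 0 := by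
  have := Nat.find_min (Yext_exists y) h
  simpa using this

lemma q0_le {q : Fin n} (hq : y q ≠ 0) : q0 y ≤ q.val :=
  Nat.find_min' _ (by rw [Yext_lt q.val q.isLt]; simpa using hq)

lemma sgn_pm {x : ℝ} (hx : x ≠ 0) (e : ℕ) :
    Real.sign x * (-1:ℝ)^e = 1 ∨ Real.sign x * (-1:ℝ)^e = -1 := by
  rcases Real.sign_apply_eq_of_ne_zero x hx with h | h <;>
  rcases Nat.even_or_odd e with he | he <;>
  simp [h, he.neg_one_pow]

lemma sgn_pm_ne {x : ℝ} (hx : x ≠ 0) (e : ℕ) : Real.sign x * (-1:ℝ)^e ≠ 0 := by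
  rcases sgn_pm hx e with h | h <;> rw [h] <;> norm_num

lemma Wc_eq {k : ℕ} (h : Yext y k ≠ 0) : Wc y k = Yext y k := if_pos h

lemma Wc_pm {k : ℕ} (h : Yext y k = 0) : Wc y k = 1 ∨ Wc y k = -1 := by
  unfold Wc
  rw [if_neg (by simpa using h)]
  split_ifs with h2
  · exact sgn_pm q0_spec _
  · refine sgn_pm ?_ _
    unfold FG
    exact Nat.findGreatest_spec (P := fun j => Yext y j ≠ 0) (m := q0 y) (by omega) q0_spec

lemma Wc_ne_zero (k : ℕ) : Wc y k ≠ 0 := by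
  by_cases h : Yext y k = 0
  · rcases Wc_pm h with h' | h' <;> rw [h'] <;> norm_num
  · rw [Wc_eq h]; exact h

lemma neg_sq_pm {t : ℝ} (ht : t ≠ 0) : -(t^2) < 0 := neg_lt_zero.mpr (by positivity)

lemma Wc_pairL {k : ℕ} (hk : k + 1 ≤ q0 y) : Wc y k * Wc y (k+1) < 0 := by
  have h0 : Yext y k = 0 := q0_min (by omega)
  have hWk : Wc y k = Real.sign (Yext y (q0 y)) * (-1)^(q0 y - k) := by
    unfold Wc; rw [if_neg (by simpa using h0), if_pos (by omega)]
  rcases eq_or_lt_of_le hk with he | hlt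
  · have hW1 : Wc y (k+1) = Yext y (q0 y) := by rw [he]; exact Wc_eq q0_spec
    have hqk : q0 y - k = 1 := by omega
    rw [hWk, hW1, hqk, pow_one]
    have := Real.sign_mul_pos_of_ne_zero _ (q0_spec (y := y))
    nlinarith
  · have h1 : Yext y (k+1) = 0 := q0_min hlt
    have hW1 : Wc y (k+1) = Real.sign (Yext y (q0 y)) * (-1)^(q0 y - (k+1)) := by
      unfold Wc; rw [if_neg (by simpa using h1), if_pos hlt]
    set s := Real.sign (Yext y (q0 y)) with hs
    have hsne : s ≠ 0 := by
      rw [hs, Ne, Real.sign_eq_zero_iff]; exact q0_spec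
    set e := q0 y - (k+1) with he'
    have hqe : q0 y - k = e + 1 := by omega
    have hkey : Wc y k * Wc y (k+1) = -((s * (-1)^e)^2) := by
      rw [hWk, hW1, hqe, pow_succ]; ring
    rw [hkey]
    exact neg_sq_pm (mul_ne_zero hsne (by positivity))

lemma Wc_pairR {k : ℕ} (hk : q0 y ≤ k) (h0 : Yext y (k+1) = 0) :
    Wc y k * Wc y (k+1) < 0 := by
  have hFsucc : FG y (k+1) = FG y k := by
    unfold FG
    rw [Nat.findGreatest_succ, if_neg (by simpa using h0)]
  have hW1 : Wc y (k+1) = Real.sign (Yext y (FG y k)) * (-1)^(k+1 - FG y k) := by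
    unfold Wc
    rw [if_neg (by simpa using h0), if_neg (by omega), hFsucc]
  by_cases hYk : Yext y k ≠ 0
  · have hF : FG y k = k :=
      le_antisymm (Nat.findGreatest_le k) (Nat.le_findGreatest le_rfl hYk)
    have : Wc y k = Yext y k := Wc_eq hYk
    rw [this, hW1, hF]
    have h1 : k + 1 - k = 1 := by omega
    rw [h1, pow_one]
    have := Real.sign_mul_pos_of_ne_zero _ hYk
    nlinarith
  · push_neg at hYk
    have hFk : FG y k ≤ k := Nat.findGreatest_le k
    have hPF : Yext y (FG y k) ≠ 0 := by
      unfold FG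
      exact Nat.findGreatest_spec (P := fun j => Yext y j ≠ 0) (m := q0 y) hk q0_spec
    have hWk : Wc y k = Real.sign (Yext y (FG y k)) * (-1)^(k - FG y k) := by
      unfold Wc
      rw [if_neg (by simpa using hYk), if_neg (by omega)]
    set s := Real.sign (Yext y (FG y k)) with hs
    have hsne : s ≠ 0 := by rw [hs, Ne, Real.sign_eq_zero_iff]; exact hPF
    set e := k - FG y k with he'
    have hqe : k + 1 - FG y k = e + 1 := by omega
    have hkey : Wc y k * Wc y (k+1) = -((s * (-1)^e)^2) := by
      rw [hWk, hW1, hqe, pow_succ]; ring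
    rw [hkey]
    exact neg_sq_pm (mul_ne_zero hsne (by positivity))

end W




section Count
variable {n : ℕ} {y : Fin n → ℝ}

lemma Wc_completion : (fun i : Fin n => Wc y i.val) ∈ completions y := by
  intro i
  by_cases h : y i = 0
  · refine Or.inr ⟨h, Wc_pm ?_⟩
    rw [Yext_lt i.val i.isLt, Fin.eta]; exact h
  · refine Or.inl ⟨h, ?_⟩
    show Wc y i.val = y i
    rw [Wc_eq (by rw [Yext_lt i.val i.isLt, Fin.eta]; exact h), Yext_lt i.val i.isLt, Fin.eta]

lemma signChanges_Wc :
    signChanges (List.ofFn (fun i : Fin n => Wc y i.val)) =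
      ((range (n-1)).filter (fun k => Wc y k * Wc y (k+1) < 0)).card :=
  signChanges_ofFn n (Wc y)

noncomputable def kap {n : ℕ} (y : Fin n → ℝ) : Fin n → ℕ :=
  fun i => if i.val < q0 y then i.val else i.val - 1

lemma kap_mem {q : Fin n} (hq : y q ≠ 0) {i : Fin n} (hi : y i = 0) :
    kap y i ∈ (range (n-1)).filter (fun k => Wc y k * Wc y (k+1) < 0) := by
  have hY : Yext y i.val = 0 := by rw [Yext_lt i.val i.isLt, Fin.eta]; exact hi
  have hne : i.val ≠ q0 y := fun h => q0_spec (y := y) (h ▸ hY)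
  have hq0n : q0 y < n := lt_of_le_of_lt (q0_le hq) q.isLt
  rw [mem_filter, mem_range]
  unfold kap
  split_ifs with h
  · exact ⟨by omega, Wc_pairL (by omega)⟩
  · refine ⟨by omega, ?_⟩
    have h1 : i.val - 1 + 1 = i.val := by omega
    exact Wc_pairR (by omega) (by rw [h1]; exact hY)

lemma kap_injOn :
    Set.InjOn (kap y) (univ.filter (fun i => y i = 0) : Finset (Fin n)) := by
  intro i hi i' hi' h
  simp only [coe_filter, Set.mem_setOf_eq, mem_univ] at hi hi'
  have hY : Yext y i.val = 0 := by rw [Yext_lt i.val i.isLt, Fin.eta]; exact hi.2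
  have hY' : Yext y i'.val = 0 := by rw [Yext_lt i'.val i'.isLt, Fin.eta]; exact hi'.2
  have hne : i.val ≠ q0 y := fun hh => q0_spec (y := y) (hh ▸ hY)
  have hne' : i'.val ≠ q0 y := fun hh => q0_spec (y := y) (hh ▸ hY')
  apply Fin.ext
  unfold kap at h
  split_ifs at h <;> omega

lemma construction {q : Fin n} (hq : y q ≠ 0) :
    ∃ z ∈ completions y,
      ((univ.filter (fun i => y i = 0)).card ≤ signChanges (List.ofFn z)) ∧
      (∀ a b : Fin n, a < b → y a * y b < 0 →
        (∀ j : Fin n, a < j → j < b → y j ≠ 0) →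
        (univ.filter (fun i => y i = 0)).card + 1 ≤ signChanges (List.ofFn z)) := by
  classical
  refine ⟨_, Wc_completion, ?_, ?_⟩
  · rw [signChanges_Wc]
    exact Finset.card_le_card_of_injOn (kap y) (fun i hi => kap_mem hq (by simpa using hi))
      kap_injOn
  · intro a b hab hprod hmid
    rw [signChanges_Wc]
    have ha0 : y a ≠ 0 := fun h => by rw [h] at hprod; simp at hprod
    have hb0 : y b ≠ 0 := fun h => by rw [h] at hprod; simp at hprod
    have habv : a.val < b.val := hab
    have hwit : Yext y a.val * Yext y (b.val - 1 + 1) < 0 ∧ a.val ≤ b.val - 1 := by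
      constructor
      · have h1 : b.val - 1 + 1 = b.val := by omega
        rw [h1, Yext_lt a.val a.isLt, Yext_lt b.val b.isLt, Fin.eta, Fin.eta]
        exact hprod
      · omega
    have hQex : ∃ j, Yext y a.val * Yext y (j+1) < 0 ∧ a.val ≤ j := ⟨b.val - 1, hwit⟩
    obtain ⟨hk₀prod, hk₀a⟩ := Nat.find_spec hQex
    have hk₀b : Nat.find hQex < b.val := by
      have := Nat.find_min' hQex hwit
      omega
    have hk₀min : ∀ j, j < Nat.find hQex → ¬(Yext y a.val * Yext y (j+1) < 0 ∧ a.val ≤ j) :=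
      fun j hj => Nat.find_min hQex hj
    set k₀ := Nat.find hQex with hk₀def
    clear_value k₀
    have hYa : Yext y a.val ≠ 0 := by
      rw [Yext_lt a.val a.isLt, Fin.eta]; exact ha0
    have hYk₀ : Yext y k₀ ≠ 0 := by
      rcases eq_or_lt_of_le hk₀a with he | hlt
      · rw [← he]; exact hYa
      · have hk₀n : k₀ < n := lt_trans hk₀b b.isLt
        rw [Yext_lt k₀ hk₀n]
        exact hmid ⟨k₀, hk₀n⟩ hlt hk₀b
    have hchg : Yext y k₀ * Yext y (k₀+1) < 0 := by
      rcases eq_or_lt_of_le hk₀a with he | hlt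
      · rw [← he]; rw [← he] at hk₀prod; exact hk₀prod
      · have hmin := hk₀min (k₀ - 1) (by omega)
        push_neg at hmin
        have h1 : k₀ - 1 + 1 = k₀ := by omega
        rw [h1] at hmin
        have h3 : ¬ (Yext y a.val * Yext y k₀ < 0) := fun hc => absurd (hmin hc) (by omega)
        have h4 : Yext y a.val * Yext y k₀ ≠ 0 := mul_ne_zero hYa hYk₀
        have h5 : 0 < Yext y a.val * Yext y k₀ := lt_of_le_of_ne (not_lt.mp h3) (Ne.symm h4)
        have h6 : 0 < Yext y k₀ * Yext y a.val := by rw [mul_comm]; exact h5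
        exact negmul h6 hk₀prod
    have hYk₁ : Yext y (k₀+1) ≠ 0 := fun h => by rw [h] at hchg; simp at hchg
    have hk₀mem : k₀ ∈ (range (n-1)).filter (fun k => Wc y k * Wc y (k+1) < 0) := by
      rw [mem_filter, mem_range]
      constructor
      · have : b.val < n := b.isLt
        omega
      · rw [Wc_eq hYk₀, Wc_eq hYk₁]; exact hchg
    have hk₀nimg : k₀ ∉ (univ.filter (fun i => y i = 0)).image (kap y) := by
      rw [mem_image]
      rintro ⟨i, hi, hκ⟩
      rw [mem_filter] at hi
      have hiz : y i = 0 := hi.2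
      have hY : Yext y i.val = 0 := by rw [Yext_lt i.val i.isLt, Fin.eta]; exact hiz
      have hq0a : q0 y ≤ a.val := q0_le ha0
      have hneq0 : i.val ≠ q0 y := fun hh => q0_spec (y := y) (hh ▸ hY)
      unfold kap at hκ
      split_ifs at hκ with hlt
      · omega
      · have hival : i.val = k₀ + 1 := by omega
        rcases eq_or_lt_of_le (show i.val ≤ b.val by omega) with he | hlt2
        · exact hb0 (by rwa [show b = i from Fin.ext he.symm])
        · refine absurd hiz (hmid i ?_ hlt2)
          show a.val < i.val
          omega
    calc (univ.filter (fun i => y i = 0)).card + 1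
        = ((univ.filter (fun i => y i = 0)).image (kap y)).card + 1 := by
          rw [Finset.card_image_of_injOn kap_injOn]
      _ = (insert k₀ ((univ.filter (fun i => y i = 0)).image (kap y))).card := by
          rw [Finset.card_insert_of_notMem hk₀nimg]
      _ ≤ _ := by
          apply Finset.card_le_card
          intro u hu
          rcases Finset.mem_insert.mp hu with rfl | hu2
          · exact hk₀mem
          · obtain ⟨i, hi, rfl⟩ := Finset.mem_image.mp hu2
            rw [mem_filter] at hi
            exact kap_mem hq hi.2

lemma C1 {q : Fin n} (hq : y q ≠ 0) :
    (univ.filter (fun i => y i = 0)).card ≤ sPlus y := by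
  obtain ⟨z, hz, h1, _⟩ := construction hq
  exact le_trans h1 (le_sPlus hz)

lemma C2 {a b : Fin n} (hab : a < b) (hprod : y a * y b < 0)
    (Z : Finset (Fin n)) (hZ0 : ∀ i ∈ Z, y i = 0) (hZout : ∀ i ∈ Z, i < a ∨ b < i) :
    Z.card + 1 ≤ sPlus y := by
  classical
  have ha0 : y a ≠ 0 := fun h => by rw [h] at hprod; simp at hprod
  have hZsub : Z ⊆ univ.filter (fun i => y i = 0) :=
    fun i hi => mem_filter.mpr ⟨mem_univ i, hZ0 i hi⟩
  by_cases hmid : ∀ j : Fin n, a < j → j < b → y j ≠ 0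
  · obtain ⟨z, hz, _, h2⟩ := construction ha0
    have h3 := h2 a b hab hprod hmid
    calc Z.card + 1 ≤ (univ.filter (fun i => y i = 0)).card + 1 :=
          Nat.add_le_add_right (Finset.card_le_card hZsub) 1
      _ ≤ signChanges (List.ofFn z) := h3
      _ ≤ sPlus y := le_sPlus hz
  · push_neg at hmid
    obtain ⟨j, hj1, hj2, hj0⟩ := hmid
    have hjZ : j ∉ Z := by
      intro h
      rcases hZout j h with h' | h'
      · exact absurd hj1 (not_lt.mpr h'.le)
      · exact absurd hj2 (not_lt.mpr h'.le)
    have hsub : insert j Z ⊆ univ.filter (fun i => y i = 0) := by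
      intro i hi
      rcases Finset.mem_insert.mp hi with rfl | hi2
      · exact mem_filter.mpr ⟨mem_univ i, hj0⟩
      · exact hZsub hi2
    calc Z.card + 1 = (insert j Z).card := (Finset.card_insert_of_notMem hjZ).symm
      _ ≤ (univ.filter (fun i => y i = 0)).card := Finset.card_le_card hsub
      _ ≤ sPlus y := C1 ha0

lemma C0 (hy : ∀ i, y i = 0) : n - 1 ≤ sPlus y := by
  have hz : (fun i : Fin n => ((-1:ℝ))^(i.val)) ∈ completions y := by
    intro i
    refine Or.inr ⟨hy i, ?_⟩
    rcases Nat.even_or_odd i.val with he | he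
    · exact Or.inl he.neg_one_pow
    · exact Or.inr he.neg_one_pow
  have hle := le_sPlus hz
  rw [signChanges_ofFn n (fun k => (-1:ℝ)^k)] at hle
  refine le_trans (le_of_eq ?_) hle
  rw [Finset.filter_true_of_mem, card_range]
  intro k _
  have h : (-1:ℝ)^k * (-1)^(k+1) = -(((-1:ℝ)^k)^2) := by rw [pow_succ]; ring
  rw [h]
  exact neg_sq_pm (by positivity)

end Count

lemma detid {n M : ℕ} (U : Matrix (Fin n) (Fin (M+1)) ℝ) (t : Fin (M+2) → Fin n)
    (x : Fin (M+1) → ℝ) :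
    ∑ j : Fin (M+2), (-1:ℝ)^(j:ℕ) * (U.mulVec x) (t j) * (U.submatrix (t ∘ j.succAbove) id).det
      = 0 := by
  classical
  set A : Matrix (Fin (M+2)) (Fin (M+2)) ℝ :=
    Matrix.of fun i j => if h : (j:ℕ) < M+1 then U (t i) ⟨j.val, h⟩ else U.mulVec x (t i)
    with hA
  have hdet : A.det = 0 := by
    rw [← Matrix.exists_mulVec_eq_zero_iff]
    refine ⟨fun j => if h : (j:ℕ) < M+1 then x ⟨j.val, h⟩ else -1, ?_, ?_⟩
    · intro h
      have := congrFun h (Fin.last (M+1))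
      simp only [Fin.val_last, lt_irrefl, dif_neg, Pi.zero_apply] at this
      norm_num at this
    · funext i
      show ∑ j, A i j * _ = 0
      rw [Fin.sum_univ_castSucc]
      have hlast : A i (Fin.last (M+1)) * (if h : ((Fin.last (M+1)):ℕ) < M+1 then x ⟨_, h⟩ else -1)
          = -(U.mulVec x (t i)) := by
        simp only [hA, Matrix.of_apply, Fin.val_last]
        rw [dif_neg (lt_irrefl (M+1)), dif_neg (lt_irrefl (M+1))]
        ring
      have hcast : ∀ j : Fin (M+1),
          A i j.castSucc * (if h : ((j.castSucc):ℕ) < M+1 then x ⟨_, h⟩ else -1)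
            = U (t i) j * x j := by
        intro j
        have hj : ((j.castSucc):ℕ) < M+1 := j.isLt
        simp only [hA, Matrix.of_apply]
        rw [dif_pos hj, dif_pos hj]
        congr 1
      calc (∑ j : Fin (M+1), A i j.castSucc * _) + A i (Fin.last (M+1)) * _
          = (∑ j : Fin (M+1), U (t i) j * x j) + -(U.mulVec x (t i)) := by
            rw [hlast]; congr 1; exact Finset.sum_congr rfl (fun j _ => hcast j)
        _ = 0 := by rw [show (∑ j : Fin (M+1), U (t i) j * x j) = U.mulVec x (t i) from rfl]; ring
  have hexp := Matrix.det_succ_column A (Fin.last (M+1))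
  rw [hdet] at hexp
  have hsub : ∀ i : Fin (M+2),
      (A.submatrix i.succAbove (Fin.last (M+1)).succAbove) = U.submatrix (t ∘ i.succAbove) id := by
    intro i
    funext i' j'
    rw [Fin.succAbove_last]
    simp only [Matrix.submatrix_apply, hA, Matrix.of_apply]
    rw [dif_pos (show ((j'.castSucc):ℕ) < M+1 by simpa using j'.isLt)]
    congr 1
  have hterm : ∀ i : Fin (M+2),
      (-1:ℝ)^((i:ℕ) + ((Fin.last (M+1)):ℕ)) * A i (Fin.last (M+1))
          * (A.submatrix i.succAbove (Fin.last (M+1)).succAbove).det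
        = (-1:ℝ)^(M+1) * ((-1:ℝ)^(i:ℕ) * (U.mulVec x) (t i)
            * (U.submatrix (t ∘ i.succAbove) id).det) := by
    intro i
    rw [hsub i]
    have hA2 : A i (Fin.last (M+1)) = U.mulVec x (t i) := by
      simp only [hA, Matrix.of_apply, Fin.val_last]
      rw [dif_neg (lt_irrefl (M+1))]
    rw [hA2, Fin.val_last, pow_add]
    ring
  rw [Finset.sum_congr rfl (fun i _ => hterm i), ← Finset.mul_sum] at hexp
  have hne : ((-1:ℝ)^(M+1)) ≠ 0 := by positivity
  exact (mul_eq_zero.mp hexp.symm).resolve_left hne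

lemma chain_extract {n m : ℕ} (V : ℕ → ℝ) (hV : ∀ k, V k ≠ 0)
    (hc : m ≤ ((range (n-1)).filter fun k => V k * V (k+1) < 0).card)
    (p : ℕ) (hp : p < n) :
    ∃ t : Fin (m+1) → ℕ, StrictMono t ∧ (∀ i, t i < n) ∧
      (∀ i : Fin m, V (t i.castSucc) * V (t i.succ) < 0) ∧ ∃ i, t i = p := by
  classical
  set C := ((range (n-1)).filter fun k => V k * V (k+1) < 0) with hC
  set c := C.card with hcard
  have hn1 : 1 ≤ n := by omega
  set K : Fin c → ℕ := fun j => ((C.orderIsoOfFin rfl) j : ℕ) with hK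
  have Kmono : StrictMono K := by
    intro a b hab
    exact (C.orderIsoOfFin rfl).lt_iff_lt.mpr hab
  have KC : ∀ j, K j ∈ C := fun j => ((C.orderIsoOfFin rfl) j).2
  have chg : ∀ j, V (K j) * V (K j + 1) < 0 ∧ K j < n - 1 := by
    intro j
    have := KC j
    rw [hC, mem_filter, mem_range] at this
    exact ⟨this.2, this.1⟩
  have nochg : ∀ k, k < n - 1 → k ∉ C → 0 < V k * V (k+1) := by
    intro k hk hkC
    have h1 : ¬ (V k * V (k+1) < 0) := fun h => hkC (by rw [hC, mem_filter, mem_range]; exact ⟨hk, h⟩)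
    have h2 : V k * V (k+1) ≠ 0 := mul_ne_zero (hV k) (hV (k+1))
    exact lt_of_le_of_ne (not_lt.mp h1) (Ne.symm h2)
  have sgnconst : ∀ u v : ℕ, u ≤ v → v ≤ n-1 → (∀ k, u ≤ k → k < v → k ∉ C) → 0 < V u * V v := by
    intro u v huv hv hmid
    induction v, huv using Nat.le_induction with
    | base => exact lt_of_le_of_ne (mul_self_nonneg _) (Ne.symm (mul_ne_zero (hV u) (hV u)))
    | succ v hv' ih =>
      have h1 : 0 < V u * V v := ih (by omega) (fun k hk1 hk2 => hmid k hk1 (by omega))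
      have h2 : 0 < V v * V (v+1) := nochg v (by omega) (hmid v hv' (by omega))
      exact posmul h1 h2
  set Blk : ℕ → ℕ → Prop :=
    fun j u => (∀ i : Fin c, (i:ℕ) < j → K i < u) ∧ (∀ i : Fin c, j ≤ (i:ℕ) → u ≤ K i) with hBlk
  have B3 : ∀ j j' u v, Blk j u → Blk j' v → j < j' → j' ≤ c → u < v := by
    intro j j' u v hu hv hjj hj'c
    have hjc : j < c := by omega
    have h1 : u ≤ K ⟨j, hjc⟩ := hu.2 ⟨j, hjc⟩ le_rfl
    have h2 : K ⟨j, hjc⟩ < v := hv.1 ⟨j, hjc⟩ hjj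
    omega
  have B1 : ∀ j u v, Blk j u → Blk j v → u ≤ n-1 → v ≤ n-1 → 0 < V u * V v := by
    have key : ∀ j u v, u ≤ v → Blk j u → Blk j v → v ≤ n-1 → 0 < V u * V v := by
      intro j u v huv hu hv hvn
      refine sgnconst u v huv hvn ?_
      intro k hk1 hk2 hkC
      obtain ⟨i, hi⟩ : ∃ i, K i = k := by
        have : (⟨k, hkC⟩ : C) ∈ Set.range (C.orderIsoOfFin rfl) :=
          (C.orderIsoOfFin rfl).surjective.range_eq ▸ Set.mem_univ _
        obtain ⟨i, hi⟩ := this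
        exact ⟨i, congrArg Subtype.val hi⟩
      by_cases hij : (i:ℕ) < j
      · have := hu.1 i hij; omega
      · have := hv.2 i (by omega); omega
    intro j u v hu hv hun hvn
    rcases le_total u v with h | h
    · exact key j u v h hu hv hvn
    · have := key j v u h hv hu hun
      rw [mul_comm]; exact this
  have B2 : ∀ j u v, j < c → Blk j u → Blk (j+1) v → u ≤ n-1 → v ≤ n-1 → V u * V v < 0 := by
    intro j u v hjc hu hv hun hvn
    set kj := K ⟨j, hjc⟩ with hkj
    have hkjB : Blk j kj := by
      constructor
      · intro i hi
        exact Kmono (show i < (⟨j, hjc⟩ : Fin c) from hi)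
      · intro i hi
        exact Kmono.monotone (show (⟨j, hjc⟩ : Fin c) ≤ i from hi)
    have hkj1B : Blk (j+1) (kj+1) := by
      constructor
      · intro i hi
        have : K i ≤ kj := Kmono.monotone (show i ≤ (⟨j, hjc⟩ : Fin c) from by
          change (i:ℕ) ≤ j; omega)
        omega
      · intro i hi
        have : kj < K i := Kmono (show (⟨j, hjc⟩ : Fin c) < i from by change j < (i:ℕ); omega)
        omega
    have hkjn : kj < n - 1 := (chg ⟨j, hjc⟩).2
    have h1 : 0 < V u * V kj := B1 j u kj hu hkjB hun (by omega)
    have h2 : V kj * V (kj+1) < 0 := (chg ⟨j, hjc⟩).1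
    have h3 : 0 < V (kj+1) * V v := B1 (j+1) (kj+1) v hkj1B hv (by omega) hvn
    have h4 : V u * V (kj+1) < 0 := negmul h1 h2
    have h5 : 0 < V v * V (kj+1) := by rw [mul_comm]; exact h3
    have h6 : V (kj+1) * V u < 0 := by rw [mul_comm]; exact h4
    have := negmul h5 h6
    rw [mul_comm]; exact this
  set rep : ℕ → ℕ := fun j => if h : 0 < j ∧ j ≤ c then K ⟨j-1, by omega⟩ + 1 else 0 with hrep
  have repBlk : ∀ j, j ≤ c → Blk j (rep j) := by
    intro j hj
    rcases Nat.eq_zero_or_pos j with rfl | hj0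
    · simp only [hrep]
      rw [dif_neg (by omega : ¬ (0 < 0 ∧ 0 ≤ c))]
      exact ⟨fun i hi => absurd hi (by omega), fun i _ => Nat.zero_le _⟩
    · simp only [hrep]
      rw [dif_pos ⟨hj0, hj⟩]
      constructor
      · intro i hi
        have : K i ≤ K ⟨j-1, by omega⟩ := Kmono.monotone (by change (i:ℕ) ≤ j-1; omega)
        omega
      · intro i hi
        have : K ⟨j-1, by omega⟩ < K i := Kmono (by change j-1 < (i:ℕ); omega)
        omega
  have repLe : ∀ j, j ≤ c → rep j ≤ n - 1 := by
    intro j hj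
    simp only [hrep]
    split_ifs with h
    · have := (chg ⟨j-1, by omega⟩).2; omega
    · omega
  set d := (univ.filter fun i : Fin c => K i < p).card with hd
  have hdc : d ≤ c := by
    rw [hd]
    calc _ ≤ (univ : Finset (Fin c)).card := card_filter_le _ _
    _ = c := by rw [card_univ, Fintype.card_fin]
  have dIff : ∀ i : Fin c, ((i:ℕ) < d ↔ K i < p) := by
    intro i
    constructor
    · intro hi
      by_contra hKi
      have hsub : (univ.filter fun j : Fin c => K j < p) ⊆ Iio i := by
        intro j hj
        rw [mem_filter] at hj
        rw [mem_Iio]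
        by_contra hji
        have : K i ≤ K j := Kmono.monotone (not_lt.mp hji)
        omega
      have := Finset.card_le_card hsub
      rw [Fin.card_Iio] at this
      omega
    · intro hKi
      have hsub : Iic i ⊆ (univ.filter fun j : Fin c => K j < p) := by
        intro j hj
        rw [mem_Iic] at hj
        rw [mem_filter]
        have : K j ≤ K i := Kmono.monotone hj
        exact ⟨mem_univ _, by omega⟩
      have := Finset.card_le_card hsub
      rw [Fin.card_Iic] at this
      omega
  have pBlk : Blk d p := by
    constructor
    · intro i hi; exact (dIff i).mp hi
    · intro i hi
      have : ¬ ((i:ℕ) < d) := by omega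
      have := (dIff i).not.mp this
      omega
  set s := min d (c - m) with hs
  have hsc : s + m ≤ c := by omega
  have hsd1 : s ≤ d := by omega
  have hsd2 : d ≤ s + m := by omega
  set t : Fin (m+1) → ℕ := fun i => if s + i.val = d then p else rep (s + i.val) with ht
  have blkT : ∀ i : Fin (m+1), Blk (s + i.val) (t i) := by
    intro i
    simp only [ht]
    split_ifs with h
    · rw [h]; exact pBlk
    · exact repBlk _ (by omega)
  have leT : ∀ i : Fin (m+1), t i ≤ n - 1 := by
    intro i
    simp only [ht]
    split_ifs with h
    · omega
    · exact repLe _ (by omega)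
  refine ⟨t, ?_, ?_, ?_, ?_⟩
  · intro i i' hii
    exact B3 (s + i.val) (s + i'.val) _ _ (blkT i) (blkT i')
      (by have : (i:ℕ) < (i':ℕ) := hii; omega) (by have : (i':ℕ) < m+1 := i'.isLt; omega)
  · intro i; have := leT i; omega
  · intro i
    have h1 := blkT i.castSucc
    have h2 := blkT i.succ
    rw [Fin.coe_castSucc] at h1
    rw [Fin.val_succ] at h2
    exact B2 (s + i.val) _ _ (by have : (i:ℕ) < m := i.isLt; omega) h1 h2
      (leT i.castSucc) (leT i.succ)
  · refine ⟨⟨d - s, by omega⟩, ?_⟩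
    simp only [ht]
    rw [if_pos (by omega)]

lemma submatrix_mulVec_row {n m : ℕ} (U : Matrix (Fin n) (Fin m) ℝ) (r : Fin m → Fin n)
    (x : Fin m → ℝ) (j : Fin m) :
    (U.submatrix r id).mulVec x j = U.mulVec x (r j) := rfl

lemma dir2 {n M : ℕ} (U : Matrix (Fin n) (Fin (M+1)) ℝ) (hnm : M+1 < n) (ε : ℝ)
    (hε : ∀ r : Fin (M+1) → Fin n, StrictMono r → 0 < ε * (U.submatrix r id).det)
    (x : Fin (M+1) → ℝ) (hx : x ≠ 0) : sPlus (U.mulVec x) ≤ M := by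
  classical
  set y := U.mulVec x with hy
  set r₀ : Fin (M+1) → Fin n := Fin.castLE (le_of_lt hnm) with hr₀
  have hr₀mono : StrictMono r₀ := Fin.strictMono_castLE _
  have hdet0 : (U.submatrix r₀ id).det ≠ 0 := by
    intro h
    have := hε r₀ hr₀mono
    rw [h, mul_zero] at this
    exact lt_irrefl 0 this
  have hyne : y ≠ 0 := by
    intro h0
    apply hdet0
    rw [← Matrix.exists_mulVec_eq_zero_iff]
    refine ⟨x, hx, ?_⟩
    funext j
    rw [submatrix_mulVec_row]
    exact congrFun h0 (r₀ j)
  obtain ⟨p, hp⟩ : ∃ p, y p ≠ 0 := Function.ne_iff.mp hyne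
  rw [sPlus_le_iff]
  intro z hz
  by_contra hgt
  push_neg at hgt
  set V : ℕ → ℝ := fun k => if h : k < n then z ⟨k, h⟩ else 1 with hV
  have hVne : ∀ k, V k ≠ 0 := by
    intro k
    simp only [hV]
    split_ifs with h
    · exact completions_ne_zero hz _
    · norm_num
  have hzz : (fun i : Fin n => V i.val) = z := by
    funext i
    simp only [hV, i.isLt, dif_pos, Fin.eta]
  have hsc : signChanges (List.ofFn z) =
      ((range (n-1)).filter fun k => V k * V (k+1) < 0).card := by
    rw [← hzz]; exact signChanges_ofFn n V
  have hcard : M + 1 ≤ ((range (n-1)).filter fun k => V k * V (k+1) < 0).card := by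
    rw [hsc] at hgt; omega
  obtain ⟨t, tmono, tlt, talt, i₀, hi₀⟩ := chain_extract (m := M+1) V hVne hcard p.val p.isLt
  set T : Fin (M+2) → Fin n := fun i => ⟨t i, tlt i⟩ with hT
  have hTmono : StrictMono T := fun a b hab => by
    simp only [hT, Fin.mk_lt_mk]
    exact tmono hab
  have hVz : ∀ i : Fin (M+2), V (t i) = z (T i) := by
    intro i
    simp only [hV, hT, tlt i, dif_pos]
  set g : Fin (M+2) → ℝ := fun j => (-1:ℝ)^(j.val) * V (t j) * V (t 0) with hg
  have hgpos : ∀ j, 0 < g j := by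
    intro j
    induction j using Fin.induction with
    | zero =>
      simp only [hg, Fin.val_zero, pow_zero, one_mul]
      exact mul_self_pos.mpr (hVne (t 0))
    | succ i ih =>
      have h1 := talt i
      have hsq1 : ((-1:ℝ)^(i.val))^2 = 1 := by
        rw [← pow_mul, mul_comm, pow_mul]
        norm_num
      have hx1 : g i.castSucc * g i.succ =
          (-(V (t i.castSucc) * V (t i.succ))) * (((-1:ℝ)^(i.val))^2 * (V (t 0))^2) := by
        simp only [hg, Fin.coe_castSucc, Fin.val_succ, pow_succ]
        ring
      have hprod : 0 < g i.castSucc * g i.succ := by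
        rw [hx1, hsq1, one_mul]
        exact mul_pos (neg_pos.mpr h1) (sq_pos_of_ne_zero (hVne (t 0)))
      exact posdiv (by rw [mul_comm] at hprod; exact hprod) ih
  have hid := detid U T x
  set F : Fin (M+2) → ℝ := fun j =>
    ((-1:ℝ)^(j:ℕ) * y (T j) * (U.submatrix (T ∘ j.succAbove) id).det) * (ε * V (t 0)) with hF
  have hFnonneg : ∀ j, 0 ≤ F j := by
    intro j
    by_cases hyj : y (T j) = 0
    · simp [hF, hyj]
    · have hVtj : V (t j) = y (T j) := by rw [hVz j]; exact completions_eq hz hyj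
      have hdetpos : 0 < ε * (U.submatrix (T ∘ j.succAbove) id).det :=
        hε _ (hTmono.comp (Fin.strictMono_succAbove j))
      have : F j = g j * (ε * (U.submatrix (T ∘ j.succAbove) id).det) := by
        simp only [hF, hg, hVtj]
        ring
      rw [this]
      exact le_of_lt (mul_pos (hgpos j) hdetpos)
  have hFsum : ∑ j, F j = 0 := by
    rw [hF, ← Finset.sum_mul, hid, zero_mul]
  have hFzero : ∀ j ∈ univ, F j = 0 :=
    (Finset.sum_eq_zero_iff_of_nonneg (fun j _ => hFnonneg j)).mp hFsum
  have hTi₀ : T i₀ = p := Fin.ext hi₀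
  have hyi₀ : y (T i₀) ≠ 0 := by rw [hTi₀]; exact hp
  have hVti₀ : V (t i₀) = y (T i₀) := by rw [hVz i₀]; exact completions_eq hz hyi₀
  have hdetpos : 0 < ε * (U.submatrix (T ∘ i₀.succAbove) id).det :=
    hε _ (hTmono.comp (Fin.strictMono_succAbove i₀))
  have hFi₀ : F i₀ = g i₀ * (ε * (U.submatrix (T ∘ i₀.succAbove) id).det) := by
    simp only [hF, hg, hVti₀]
    ring
  have : (0:ℝ) < F i₀ := by
    rw [hFi₀]
    exact mul_pos (hgpos i₀) hdetpos
  rw [hFzero i₀ (mem_univ _)] at this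
  exact lt_irrefl 0 this

lemma submatrix_mulVec_row' {n m : ℕ} (U : Matrix (Fin n) (Fin m) ℝ) (r : Fin m → Fin n)
    (x : Fin m → ℝ) (j : Fin m) :
    (U.submatrix r id).mulVec x j = U.mulVec x (r j) := rfl

lemma fin_strictMono_le {m' n' : ℕ} {r : Fin m' → Fin n'} (hr : StrictMono r) :
    ∀ i : Fin m', (i:ℕ) ≤ (r i : ℕ) := by
  classical
  set g : ℕ → ℕ := fun k => if h : k < m' then (r ⟨k, h⟩ : ℕ) else n' + k with hg
  have hgmono : StrictMono g := by
    intro u v huv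
    simp only [hg]
    split_ifs with h1 h2 h2
    · exact hr (show (⟨u, h1⟩ : Fin m') < ⟨v, h2⟩ from by rw [Fin.mk_lt_mk]; exact huv)
    · have := (r ⟨u, h1⟩).isLt; omega
    · omega
    · omega
  intro i
  have h := hgmono.le_apply (x := i.val)
  simp only [hg] at h
  rw [dif_pos i.isLt] at h
  simpa using h

section Dir1
variable {n M : ℕ} (U : Matrix (Fin n) (Fin (M+1)) ℝ) (hnm : M+1 < n)
  (hyp : ∀ x : Fin (M+1) → ℝ, x ≠ 0 → sPlus (U.mulVec x) ≤ M)

include hnm hyp in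
lemma ZCON (x : Fin (M+1) → ℝ) (hx : x ≠ 0) (Z : Finset (Fin n))
    (hZ : ∀ i ∈ Z, U.mulVec x i = 0) (hcard : M + 1 ≤ Z.card) : False := by
  classical
  have hsp := hyp x hx
  by_cases hy0 : ∀ i, U.mulVec x i = 0
  · have := C0 hy0
    omega
  · push_neg at hy0
    obtain ⟨q, hq⟩ := hy0
    have h1 := C1 hq
    have hsub : Z ⊆ univ.filter (fun i => U.mulVec x i = 0) :=
      fun i hi => mem_filter.mpr ⟨mem_univ i, hZ i hi⟩
    have h2 := Finset.card_le_card hsub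
    omega

include hnm hyp in
lemma E1 (r : Fin (M+1) → Fin n) (hr : StrictMono r) : (U.submatrix r id).det ≠ 0 := by
  classical
  intro hdet
  obtain ⟨x, hx, hker⟩ := Matrix.exists_mulVec_eq_zero_iff.mpr hdet
  refine ZCON U hnm hyp x hx (image r univ) ?_ ?_
  · rintro i hi
    obtain ⟨j, _, rfl⟩ := Finset.mem_image.mp hi
    rw [← submatrix_mulVec_row']
    exact congrFun hker j
  · rw [Finset.card_image_of_injective _ hr.injective, card_univ, Fintype.card_fin]

include hnm hyp in
lemma D2 (t : Fin (M+2) → Fin n) (ht : StrictMono t) (a : Fin (M+1)) :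
    0 < (U.submatrix (t ∘ (a.castSucc).succAbove) id).det
        * (U.submatrix (t ∘ (a.succ).succAbove) id).det := by
  classical
  set e : Fin M → Fin (M+2) := fun j => (a.castSucc).succAbove (a.succAbove j) with he
  have hemono : StrictMono e :=
    (Fin.strictMono_succAbove _).comp (Fin.strictMono_succAbove _)
  have he_ne1 : ∀ j, e j ≠ a.castSucc := fun j => Fin.succAbove_ne _ _
  have he_ne2 : ∀ j, e j ≠ a.succ := by
    intro j h
    have h' : (a.castSucc).succAbove (a.succAbove j) = a.succ := h
    have h2 : (a.castSucc).succAbove (a.succAbove j) = (a.castSucc).succAbove a := by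
      rw [Fin.succAbove_castSucc_self]
      exact h'
    exact Fin.succAbove_ne a j (Fin.succAbove_right_injective h2)
  set B : Matrix (Fin (M+1)) (Fin (M+1)) ℝ :=
    Matrix.of fun j k => if h : (j:ℕ) < M then U (t (e ⟨j.val, h⟩)) k else 0 with hB
  have hdetB : B.det = 0 := by
    apply Matrix.det_eq_zero_of_row_eq_zero (Fin.last M)
    intro k
    simp only [hB, Matrix.of_apply, Fin.val_last]
    rw [dif_neg (lt_irrefl M)]
  obtain ⟨x, hx, hker⟩ := Matrix.exists_mulVec_eq_zero_iff.mpr hdetB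
  set y := U.mulVec x with hy
  have hyz : ∀ j : Fin M, y (t (e j)) = 0 := by
    intro j
    have h1 := congrFun hker ⟨j.val, by omega⟩
    have h2 : (B.mulVec x) ⟨j.val, by omega⟩ = y (t (e j)) := by
      show (∑ k, B ⟨j.val, by omega⟩ k * x k) = ∑ k, U (t (e j)) k * x k
      refine Finset.sum_congr rfl (fun k _ => ?_)
      congr 1
      simp only [hB, Matrix.of_apply]
      rw [dif_pos j.isLt]
    rw [h2] at h1
    exact h1
  set Z₀ : Finset (Fin n) := image (fun j => t (e j)) univ with hZ₀
  have hZ₀card : Z₀.card = M := by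
    rw [hZ₀]
    have h1 : Function.Injective (fun j => t (e j)) := (ht.comp hemono).injective
    rw [Finset.card_image_of_injective _ h1, card_univ, Fintype.card_fin]
  have hZ₀zero : ∀ i ∈ Z₀, y i = 0 := by
    rintro i hi
    obtain ⟨j, _, rfl⟩ := Finset.mem_image.mp hi
    exact hyz j
  have hyα : y (t a.castSucc) ≠ 0 := by
    intro h0
    refine ZCON U hnm hyp x hx (insert (t a.castSucc) Z₀) ?_ ?_
    · intro i hi
      rcases Finset.mem_insert.mp hi with rfl | hi2
      · exact h0
      · exact hZ₀zero i hi2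
    · rw [Finset.card_insert_of_notMem, hZ₀card]
      rintro hmem
      obtain ⟨j, _, hj⟩ := Finset.mem_image.mp hmem
      exact he_ne1 j (ht.injective hj)
  have hyβ : y (t a.succ) ≠ 0 := by
    intro h0
    refine ZCON U hnm hyp x hx (insert (t a.succ) Z₀) ?_ ?_
    · intro i hi
      rcases Finset.mem_insert.mp hi with rfl | hi2
      · exact h0
      · exact hZ₀zero i hi2
    · rw [Finset.card_insert_of_notMem, hZ₀card]
      rintro hmem
      obtain ⟨j, _, hj⟩ := Finset.mem_image.mp hmem
      exact he_ne2 j (ht.injective hj)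
  have hout : ∀ i ∈ Z₀, i < t a.castSucc ∨ t a.succ < i := by
    rintro i hi
    obtain ⟨j, _, rfl⟩ := Finset.mem_image.mp hi
    have h1 : (e j).val ≠ a.val := fun h => he_ne1 j (Fin.ext (by simpa using h))
    have h2 : (e j).val ≠ a.val + 1 := fun h => he_ne2 j (Fin.ext (by simpa using h))
    rcases lt_or_gt_of_ne (show (e j).val ≠ (a.castSucc).val from by simpa using h1) with h | h
    · left; exact ht (by rwa [Fin.lt_def])
    · right
      refine ht (show a.succ < e j from ?_)
      rw [Fin.lt_def, Fin.val_succ]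
      simp only [Fin.coe_castSucc] at h
      omega
  have hprodpos : 0 < y (t a.castSucc) * y (t a.succ) := by
    by_contra hcon
    have hne := mul_ne_zero hyα hyβ
    have hlt : y (t a.castSucc) * y (t a.succ) < 0 :=
      lt_of_le_of_ne (not_lt.mp hcon) hne
    have hC2 := C2 (ht (Fin.castSucc_lt_succ : a.castSucc < a.succ)) hlt Z₀ hZ₀zero hout
    have hle := hyp x hx
    rw [← hy] at hle
    rw [hZ₀card] at hC2
    omega
  have hid := detid U t x
  have hvanish : ∀ j : Fin (M+2), j ≠ a.castSucc → j ≠ a.succ → y (t j) = 0 := by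
    intro j hj1 hj2
    obtain ⟨w, hw⟩ := Fin.exists_succAbove_eq hj1
    have hwa : w ≠ a := by
      rintro rfl
      rw [Fin.succAbove_castSucc_self] at hw
      exact hj2 hw.symm
    obtain ⟨v, hv⟩ := Fin.exists_succAbove_eq hwa
    have : e v = j := by rw [he]; dsimp only; rw [hv, hw]
    rw [← this]
    exact hyz v
  set f : Fin (M+2) → ℝ :=
    fun j => (-1:ℝ)^(j:ℕ) * y (t j) * (U.submatrix (t ∘ j.succAbove) id).det with hf
  have hS : ∑ j, f j = f a.castSucc + f a.succ := by
    have hne : a.castSucc ≠ a.succ := ne_of_lt (Fin.castSucc_lt_succ : a.castSucc < a.succ)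
    rw [← Finset.sum_pair hne]
    refine (Finset.sum_subset (Finset.subset_univ _) ?_).symm
    intro j _ hj
    rw [Finset.mem_insert, Finset.mem_singleton] at hj
    push_neg at hj
    rw [hf]
    dsimp only
    rw [hvanish j hj.1 hj.2]
    ring
  rw [hid] at hS
  set Dα := (U.submatrix (t ∘ (a.castSucc).succAbove) id).det with hDα
  set Dβ := (U.submatrix (t ∘ (a.succ).succAbove) id).det with hDβ
  have hfα : f a.castSucc = (-1:ℝ)^(a:ℕ) * y (t a.castSucc) * Dα := by
    rw [hf]; dsimp only; rw [Fin.coe_castSucc]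
  have hfβ : f a.succ = -((-1:ℝ)^(a:ℕ) * y (t a.succ) * Dβ) := by
    rw [hf]; dsimp only; rw [Fin.val_succ, pow_succ]; ring
  have heq : y (t a.castSucc) * Dα = y (t a.succ) * Dβ := by
    have h1 : ((-1:ℝ)^(a:ℕ)) * (y (t a.castSucc) * Dα - y (t a.succ) * Dβ) = 0 := by
      rw [← hS.symm] at *
      rw [hfα, hfβ] at hS
      linarith [hS.symm]
    have h2 : ((-1:ℝ)^(a:ℕ)) ≠ 0 := by positivity
    have := mul_eq_zero.mp h1
    rcases this with h | h
    · exact absurd h h2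
    · linarith
  have hDαne : Dα ≠ 0 := E1 U hnm hyp _ (ht.comp (Fin.strictMono_succAbove _))
  have hDβne : Dβ ≠ 0 := E1 U hnm hyp _ (ht.comp (Fin.strictMono_succAbove _))
  have hv : y (t a.castSucc) * Dα ≠ 0 := mul_ne_zero hyα hDαne
  have hx2 : (Dα * Dβ) * (y (t a.castSucc) * y (t a.succ))
      = (y (t a.castSucc) * Dα) * (y (t a.castSucc) * Dα) := by
    nth_rewrite 2 [heq]
    ring
  exact posdiv (by rw [hx2]; exact mul_self_pos.mpr hv) hprodpos
end Dir1

section Conn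
variable {n M : ℕ} (U : Matrix (Fin n) (Fin (M+1)) ℝ) (hnm : M+1 < n)
  (hyp : ∀ x : Fin (M+1) → ℝ, x ≠ 0 → sPlus (U.mulVec x) ≤ M)

include hnm hyp in
lemma conn : ∀ (N : ℕ) (r : Fin (M+1) → Fin n), StrictMono r → (∑ i, (r i : ℕ)) ≤ N →
    0 < (U.submatrix r id).det
        * (U.submatrix (Fin.castLE (le_of_lt hnm) : Fin (M+1) → Fin n) id).det := by
  classical
  intro N
  induction N using Nat.strong_induction_on with
  | _ N IH =>
    intro r hr hsum
    by_cases hbase : ∀ i, r i = Fin.castLE (le_of_lt hnm) i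
    · have : r = (Fin.castLE (le_of_lt hnm) : Fin (M+1) → Fin n) := funext hbase
      rw [this]
      exact mul_self_pos.mpr (E1 U hnm hyp _ (Fin.strictMono_castLE _))
    · push_neg at hbase
      obtain ⟨i₁, hi₁⟩ := hbase
      have hPex : ∃ k, ∃ h : k < M+1, ((r ⟨k, h⟩ : ℕ)) ≠ k := by
        refine ⟨i₁.val, i₁.isLt, ?_⟩
        intro h
        exact hi₁ (Fin.ext (by simpa using h))
      have hspec := Nat.find_spec hPex
      have hminP : ∀ k, k < Nat.find hPex → ∀ (h : k < M+1), ((r ⟨k, h⟩ : ℕ)) = k := by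
        intro k hk h
        have := Nat.find_min hPex hk
        push_neg at this
        exact this h
      set k₀ := Nat.find hPex with hk₀def
      clear_value k₀
      obtain ⟨hk₀lt, hk₀ne⟩ := hspec
      set ra := (r ⟨k₀, hk₀lt⟩ : ℕ) with hradef
      have hra : k₀ < ra := by
        have h1 := fin_strictMono_le hr ⟨k₀, hk₀lt⟩
        have hgv : ((⟨k₀, hk₀lt⟩ : Fin (M+1)) : ℕ) = k₀ := rfl
        omega
      have hra_n : ra < n := (r ⟨k₀, hk₀lt⟩).isLt
      set a : Fin (M+1) := ⟨k₀, hk₀lt⟩ with ha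
      -- the ℕ-level version of r
      set R : ℕ → ℕ := fun k => if h : k < M+1 then (r ⟨k, h⟩ : ℕ) else n + k with hR
      have hRr : ∀ (k) (h : k < M+1), R k = (r ⟨k, h⟩ : ℕ) := by
        intro k h
        simp only [hR]
        rw [dif_pos h]
      have hRmono : ∀ p q : ℕ, p < q → q < M+1 → R p < R q := by
        intro p q hpq hq
        rw [hRr p (by omega), hRr q hq]
        exact hr (Fin.mk_lt_mk.mpr hpq)
      have hRprev : ∀ k, k < k₀ → R k = k := by
        intro k hk
        rw [hRr k (by omega)]
        exact hminP k hk (by omega)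
      have hRa : R k₀ = ra := hRr k₀ hk₀lt
      have hRlt : ∀ k, k < M+1 → R k < n := by
        intro k h
        rw [hRr k h]
        exact (r ⟨k, h⟩).isLt
      set T : ℕ → ℕ := fun k =>
        if k < k₀ then R k else if k = k₀ then ra - 1 else R (k-1) with hT
      have hTlt : ∀ k, k < M+2 → T k < n := by
        intro k hk
        simp only [hT]
        split_ifs with h1 h2
        · exact hRlt k (by omega)
        · omega
        · exact hRlt (k-1) (by omega)
      set tt : Fin (M+2) → Fin n := fun j => ⟨T j.val, hTlt _ j.isLt⟩ with htt
      have httval : ∀ j : Fin (M+2), (tt j : ℕ) = T j.val := fun _ => rfl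
      have hTlo : ∀ k, k < k₀ → T k = R k := by
        intro k hk
        simp only [hT]
        rw [if_pos hk]
      have hTmid : T k₀ = ra - 1 := by
        simp only [hT]
        rw [if_neg (by omega)]
        simp
      have hThi : ∀ k, k₀ < k → T k = R (k-1) := by
        intro k hk
        simp only [hT]
        rw [if_neg (by omega), if_neg (by omega)]
      have httmono : StrictMono tt := by
        rw [Fin.strictMono_iff_lt_succ]
        intro j
        rw [Fin.lt_def, httval, httval]
        show T (j:ℕ) < T ((j:ℕ)+1)
        have hjlt : (j:ℕ) < M+1 := j.isLt
        rcases lt_trichotomy ((j:ℕ)+1) k₀ with h1 | h1 | h1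
        · rw [hTlo _ (by omega), hTlo _ h1]
          exact hRmono _ _ (by omega) (by omega)
        · rw [hTlo _ (by omega), h1, hTmid]
          have := hRprev (j:ℕ) (by omega)
          omega
        · rcases lt_trichotomy ((j:ℕ)) k₀ with h2 | h2 | h2
          · omega
          · rw [h2, hTmid, hThi _ (by omega)]
            have h3 : k₀+1-1 = k₀ := rfl
            rw [h3, hRa]
            omega
          · rw [hThi _ h2, hThi _ (by omega)]
            exact hRmono _ _ (by omega) (by omega)
      set r' : Fin (M+1) → Fin n := fun i =>
        if i = a then ⟨ra - 1, by omega⟩ else r i with hr'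
      have htα : tt ∘ (a.castSucc).succAbove = r := by
        funext i
        simp only [Function.comp_apply]
        rcases lt_or_ge i a with hlt | hle
        · rw [Fin.succAbove_castSucc_of_lt a i hlt]
          apply Fin.ext
          rw [httval]
          show T (i:ℕ) = (r i : ℕ)
          have hival : (i:ℕ) < k₀ := hlt
          rw [hTlo _ hival, hRr _ i.isLt, Fin.eta]
        · rw [Fin.succAbove_castSucc_of_le a i hle]
          apply Fin.ext
          rw [httval]
          show T ((i:ℕ)+1) = (r i : ℕ)
          have hival : k₀ ≤ (i:ℕ) := hle
          rw [hThi _ (by omega)]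
          have h3 : (i:ℕ)+1-1 = (i:ℕ) := rfl
          rw [h3, hRr _ i.isLt, Fin.eta]
      have htβ : tt ∘ (a.succ).succAbove = r' := by
        funext i
        simp only [Function.comp_apply]
        rcases le_or_gt i a with hle | hlt
        · rw [Fin.succAbove_succ_of_le a i hle]
          rcases eq_or_lt_of_le hle with he | hlt2
          · rw [show i = a from he]
            apply Fin.ext
            rw [httval]
            show T k₀ = (r' a : ℕ)
            rw [hTmid]
            simp only [hr', if_pos rfl]
          · rw [show (r' i) = r i from by simp only [hr']; rw [if_neg (ne_of_lt hlt2)]]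
            apply Fin.ext
            rw [httval]
            show T (i:ℕ) = (r i : ℕ)
            have hival : (i:ℕ) < k₀ := hlt2
            rw [hTlo _ hival, hRr _ i.isLt, Fin.eta]
        · rw [Fin.succAbove_succ_of_lt a i hlt]
          rw [show (r' i) = r i from by
            simp only [hr']
            rw [if_neg (by intro h; rw [h] at hlt; exact lt_irrefl a hlt)]]
          apply Fin.ext
          rw [httval]
          show T ((i:ℕ)+1) = (r i : ℕ)
          have hival : k₀ < (i:ℕ) := hlt
          rw [hThi _ (by omega)]
          have h3 : (i:ℕ)+1-1 = (i:ℕ) := rfl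
          rw [h3, hRr _ i.isLt, Fin.eta]
      have hr'mono : StrictMono r' := by
        have h1 : StrictMono (tt ∘ (a.succ).succAbove) :=
          httmono.comp (Fin.strictMono_succAbove _)
        rwa [htβ] at h1
      have hD2 := D2 U hnm hyp tt httmono a
      rw [htα, htβ] at hD2
      have hsum' : (∑ i, (r' i : ℕ)) < ∑ i, (r i : ℕ) := by
        apply Finset.sum_lt_sum
        · intro i _
          simp only [hr']
          split_ifs with h
          · rw [h]
            show ra - 1 ≤ (r a : ℕ)
            have h4 : (r a : ℕ) = ra := rfl
            omega
          · exact le_rfl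
        · refine ⟨a, mem_univ a, ?_⟩
          simp only [hr', if_pos rfl]
          show ra - 1 < (r a : ℕ)
          have h4 : (r a : ℕ) = ra := rfl
          omega
      have hIH := IH (∑ i, (r' i : ℕ)) (by omega) r' hr'mono le_rfl
      exact posmul hD2 hIH
end Conn

theorem stmt4 {n m : ℕ} (U : Matrix (Fin n) (Fin m) ℝ) (hnm : m < n) :
    (∀ x : Fin m → ℝ, x ≠ 0 → sPlus (U.mulVec x) ≤ m - 1)
      ↔ ∃ ε : ℝ, (ε = 1 ∨ ε = -1) ∧
          ∀ r : Fin m → Fin n, StrictMono r →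
            0 < ε * (U.submatrix r id).det := by
  rcases Nat.eq_zero_or_pos m with rfl | hm
  · constructor
    · intro _
      refine ⟨1, Or.inl rfl, ?_⟩
      intro r hr
      rw [Matrix.det_fin_zero]
      norm_num
    · intro _ x hx
      exact absurd (funext fun i => i.elim0 : x = 0) hx
  · obtain ⟨M, rfl⟩ : ∃ M, m = M + 1 := ⟨m - 1, by omega⟩
    have hMn : M + 1 < n := hnm
    constructor
    · intro h1
      have hyp : ∀ x : Fin (M+1) → ℝ, x ≠ 0 → sPlus (U.mulVec x) ≤ M := by
        intro x hx
        have := h1 x hx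
        simpa using this
      set r₀ : Fin (M+1) → Fin n := Fin.castLE (le_of_lt hMn) with hr₀
      have hd0 : (U.submatrix r₀ id).det ≠ 0 := E1 U hMn hyp r₀ (Fin.strictMono_castLE _)
      refine ⟨if 0 < (U.submatrix r₀ id).det then 1 else -1, by split_ifs <;> simp, ?_⟩
      intro r hr
      have hc := conn U hMn hyp (∑ i, (r i : ℕ)) r hr le_rfl
      split_ifs with hpos
      · rw [one_mul]
        exact posdiv hc hpos
      · have hneg : (U.submatrix r₀ id).det < 0 := lt_of_le_of_ne (not_lt.mp hpos) hd0
        rcases mul_pos_iff.mp hc with ⟨h1', h2'⟩ | ⟨h1', h2'⟩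
        · linarith
        · linarith
    · rintro ⟨ε, hε1, hε⟩ x hx
      have := dir2 U hMn ε hε x hx
      simpa using this
end

section
/- Consider x(i+1) = A(i)x(i) where each A(i) ∈ R^{n×n} is strictly sign-regular (SSR_k for all k). Then for any nonzero x_0, the solution satisfies s^+(x(i+1)) ≤ s^-(x(i)) for all i ≥ 0; consequently the maps i ↦ s^+(x(i)) and i ↦ s^-(x(i)) are nonincreasing, and the number of indices i for which s^-(x(i)) < s^+(x(i)) is at most n-1. -/
open Matrix

namespace SSRAux

/-- changes of `f` among pair-indices `< m` -/
noncomputable def chg (f : ℕ → ℝ) (m : ℕ) : Finset ℕ :=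
  (Finset.range m).filter (fun j => f j * f (j+1) < 0)

lemma mem_chg {f : ℕ → ℝ} {m j : ℕ} : j ∈ chg f m ↔ j < m ∧ f j * f (j+1) < 0 := by
  simp [chg]

lemma chg_congr {f g : ℕ → ℝ} {m : ℕ} (h : ∀ j ≤ m, f j = g j) : chg f m = chg g m := by
  unfold chg
  refine Finset.filter_congr ?_
  intro j hj
  rw [Finset.mem_range] at hj
  rw [h j (le_of_lt hj), h (j+1) hj]

lemma chg_mono (f : ℕ → ℝ) {a b : ℕ} (h : a ≤ b) : chg f a ⊆ chg f b :=
  Finset.filter_subset_filter _ (Finset.range_subset_range.2 h)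

lemma chg_zero (f : ℕ → ℝ) : chg f 0 = ∅ := by simp [chg]

lemma card_chg_succ (f : ℕ → ℝ) (m : ℕ) :
    (chg f (m+1)).card = (chg f m).card + (if f m * f (m+1) < 0 then 1 else 0) := by
  unfold chg
  rw [Finset.range_add_one, Finset.filter_insert]
  split <;> simp [Finset.card_insert_of_notMem, Finset.mem_filter]

lemma card_filter_range_succ (P : ℕ → Prop) [DecidablePred P] (m : ℕ) :
    ((Finset.range (m+1)).filter P).card
      = ((Finset.range m).filter (fun j => P (j+1))).card + (if P 0 then 1 else 0) := by
  simp only [Finset.card_filter]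
  rw [Finset.sum_range_succ']

lemma signChanges_nil : signChanges [] = 0 := by simp [signChanges]
lemma signChanges_single (a : ℝ) : signChanges [a] = 0 := by simp [signChanges]
lemma signChanges_cons_cons (a b : ℝ) (l : List ℝ) :
    signChanges (a :: b :: l) = (if a * b < 0 then 1 else 0) + signChanges (b :: l) := by
  unfold signChanges
  rw [List.tail_cons, List.tail_cons, List.zip_cons_cons, List.filter_cons]
  by_cases h : a * b < 0 <;> simp [h, Nat.add_comm]

lemma bridge (L : List ℝ) :
    signChanges L = (chg (fun j => L.getD j 0) (L.length - 1)).card := by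
  induction L with
  | nil => simp [signChanges_nil, chg_zero]
  | cons a L ih =>
    cases L with
    | nil => simp [signChanges_single, chg_zero]
    | cons b l =>
      rw [signChanges_cons_cons, ih]
      unfold chg
      have hlen : (a :: b :: l).length - 1 = (l.length + 1) := by simp
      rw [hlen]
      rw [card_filter_range_succ (fun j => (a :: b :: l).getD j 0 * (a :: b :: l).getD (j+1) 0 < 0)]
      have h2 : (b :: l).length - 1 = l.length := by simp
      rw [h2]
      simp only [List.getD_cons_succ, List.getD_cons_zero]
      omega

/-- cumulative number of changes -/
noncomputable def cum (f : ℕ → ℝ) (i : ℕ) : ℕ := (chg f i).card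

lemma cum_zero (f : ℕ → ℝ) : cum f 0 = 0 := by simp [cum, chg_zero]

lemma cum_succ_le (f : ℕ → ℝ) (i : ℕ) : cum f (i+1) ≤ cum f i + 1 := by
  rw [cum, cum, card_chg_succ]; split <;> omega

lemma cum_mono (f : ℕ → ℝ) {a b : ℕ} (h : a ≤ b) : cum f a ≤ cum f b :=
  Finset.card_le_card (chg_mono f h)

lemma sign_alt {f : ℕ → ℝ} (hf : ∀ j, f j ≠ 0) (i : ℕ) :
    0 < f 0 * ((-1 : ℝ) ^ (cum f i) * f i) := by
  induction i with
  | zero =>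
    rw [cum_zero]
    simpa using mul_self_pos.2 (hf 0)
  | succ i ih =>
    rw [cum, card_chg_succ, ← cum]
    by_cases h : f i * f (i+1) < 0
    · rw [if_pos h, pow_succ]
      have h2 := mul_self_pos.2 (hf i)
      nlinarith [ih, h, h2]
    · rw [if_neg h, add_zero]
      have h' : 0 < f i * f (i+1) := by
        rcases lt_trichotomy (f i * f (i+1)) 0 with h1 | h1 | h1
        · exact absurd h1 h
        · exact absurd (mul_eq_zero.1 h1) (by push_neg; exact ⟨hf i, hf (i+1)⟩)
        · exact h1
      nlinarith [ih, h', mul_self_pos.2 (hf i)]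

lemma attain {g : ℕ → ℕ} (h0 : g 0 = 0) (hs : ∀ i, g (i+1) ≤ g i + 1) :
    ∀ m t, t ≤ g m → ∃ i, i ≤ m ∧ g i = t := by
  intro m
  induction m with
  | zero => intro t ht; exact ⟨0, le_refl 0, by omega⟩
  | succ m ih =>
    intro t ht
    by_cases h : t ≤ g m
    · obtain ⟨i, hi, hgi⟩ := ih t h
      exact ⟨i, by omega, hgi⟩
    · exact ⟨m+1, le_refl _, by have := hs m; omega⟩

lemma pos_of_no_chg {f : ℕ → ℝ} (hf : ∀ j, f j ≠ 0) {a b : ℕ} (hab : a ≤ b)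
    (h : ∀ j, a ≤ j → j < b → ¬ f j * f (j+1) < 0) : 0 < f a * f b := by
  have hc : chg f b = chg f a := by
    refine le_antisymm ?_ (chg_mono f hab)
    intro j hj
    rw [mem_chg] at hj ⊢
    rcases lt_or_ge j a with h1 | h1
    · exact ⟨h1, hj.2⟩
    · exact absurd hj.2 (h j h1 hj.1)
  have ha := sign_alt hf a
  have hb := sign_alt hf b
  rw [cum, hc, ← cum] at hb
  set u := f 0 * (-1 : ℝ) ^ (cum f a) with hu
  have ha' : 0 < u * f a := by rw [hu]; ring_nf; ring_nf at ha; linarith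
  have hb' : 0 < u * f b := by rw [hu]; ring_nf; ring_nf at hb; linarith
  rcases lt_trichotomy u 0 with h1 | h1 | h1
  · have h2 : f a < 0 := by nlinarith
    have h3 : f b < 0 := by nlinarith
    nlinarith
  · rw [h1] at ha'; simp at ha'
  · have h2 : 0 < f a := by nlinarith
    have h3 : 0 < f b := by nlinarith
    nlinarith

/-- the sorted list of indices where `v` is nonzero -/
noncomputable def suppList {n : ℕ} (v : Fin n → ℝ) : List (Fin n) :=
  (List.finRange n).filter (fun i => decide (v i ≠ 0))

lemma mem_suppList {n : ℕ} {v : Fin n → ℝ} {i : Fin n} :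
    i ∈ suppList v ↔ v i ≠ 0 := by simp [suppList]

lemma suppList_sorted {n : ℕ} (v : Fin n → ℝ) : (suppList v).Pairwise (· < ·) :=
  (List.pairwise_lt_finRange n).filter _

/-- enumeration of the support -/
noncomputable def sfun {n : ℕ} (v : Fin n → ℝ) (i0 : Fin n) (k : ℕ) : Fin n :=
  (suppList v).getD k i0

lemma sfun_lt {n : ℕ} (v : Fin n → ℝ) (i0 : Fin n) {k k' : ℕ}
    (h : k < k') (h' : k' < (suppList v).length) :
    sfun v i0 k < sfun v i0 k' := by
  have hk : k < (suppList v).length := lt_trans h h'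
  rw [sfun, sfun, List.getD_eq_getElem _ _ hk, List.getD_eq_getElem _ _ h']
  have := List.pairwise_iff_get.1 (suppList_sorted v) ⟨k, hk⟩ ⟨k', h'⟩ h
  simpa using this

lemma sfun_ne {n : ℕ} (v : Fin n → ℝ) (i0 : Fin n) {k : ℕ}
    (h : k < (suppList v).length) : v (sfun v i0 k) ≠ 0 := by
  rw [sfun, List.getD_eq_getElem _ _ h]
  exact mem_suppList.1 (List.getElem_mem _)

lemma sfun_surj {n : ℕ} {v : Fin n → ℝ} (i0 : Fin n) {i : Fin n} (h : v i ≠ 0) :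
    ∃ k, k < (suppList v).length ∧ sfun v i0 k = i := by
  have : i ∈ suppList v := mem_suppList.2 h
  obtain ⟨⟨k, hk⟩, hget⟩ := List.mem_iff_get.1 this
  exact ⟨k, hk, by rw [sfun, List.getD_eq_getElem _ _ hk]; simpa using hget⟩

lemma sMinus_eq {n : ℕ} (v : Fin n → ℝ) (i0 : Fin n) :
    sMinus v = (chg (fun k => v (sfun v i0 k)) ((suppList v).length - 1)).card := by
  have h1 : (List.ofFn v).filter (fun a => decide (a ≠ 0)) = (suppList v).map v := by
    rw [List.ofFn_eq_map, List.filter_map]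
    rfl
  rw [sMinus, h1, bridge]
  rcases Nat.eq_zero_or_pos (suppList v).length with hm | hm
  · rw [List.length_map, hm]
    simp [chg_zero]
  · rw [List.length_map]
    congr 1
    apply chg_congr
    intro j hj
    have hjlt : j < (suppList v).length := by omega
    rw [List.getD_eq_getElem _ _ (by simpa using hjlt), sfun, List.getD_eq_getElem _ _ hjlt]
    simp

/-- extend a vector on `Fin n` to `ℕ`, padding with 1 -/
noncomputable def pad {n : ℕ} (z : Fin n → ℝ) (j : ℕ) : ℝ :=
  if h : j < n then z ⟨j, h⟩ else 1

lemma pad_ne {n : ℕ} {z : Fin n → ℝ} (hz : ∀ i, z i ≠ 0) (j : ℕ) : pad z j ≠ 0 := by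
  rw [pad]; split
  · apply hz
  · norm_num

lemma signChanges_ofFn_eq {n : ℕ} (z : Fin n → ℝ) :
    signChanges (List.ofFn z) = (chg (pad z) (n-1)).card := by
  rw [bridge, List.length_ofFn]
  rcases Nat.eq_zero_or_pos n with hn | hn
  · subst hn; simp [chg_zero]
  · congr 1
    apply chg_congr
    intro j hj
    have hjlt : j < n := by omega
    rw [List.getD_eq_getElem _ _ (by simpa using hjlt), pad, dif_pos hjlt]
    simp

lemma completions_ne_zero {n : ℕ} {y z : Fin n → ℝ} (hz : z ∈ completions y) (i : Fin n) :
    z i ≠ 0 := by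
  rcases hz i with ⟨h1, h2⟩ | ⟨h1, h2 | h2⟩ <;> rw [h2] <;> first | exact h1 | norm_num

lemma completions_agree {n : ℕ} {y z : Fin n → ℝ} (hz : z ∈ completions y) {i : Fin n}
    (h : y i ≠ 0) : z i = y i := by
  rcases hz i with ⟨h1, h2⟩ | ⟨h1, h2⟩
  · exact h2
  · exact absurd h1 h

lemma completions_nonempty {n : ℕ} (y : Fin n → ℝ) :
    (fun i => if y i = 0 then 1 else y i) ∈ completions y := by
  intro i
  by_cases h : y i = 0
  · exact Or.inr ⟨h, Or.inl (by simp [h])⟩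
  · exact Or.inl ⟨h, by simp [h]⟩

lemma signChanges_le_pred {n : ℕ} (z : Fin n → ℝ) :
    signChanges (List.ofFn z) ≤ n - 1 := by
  rw [signChanges_ofFn_eq]
  calc (chg (pad z) (n-1)).card ≤ (Finset.range (n-1)).card := Finset.card_filter_le _ _
  _ = n - 1 := Finset.card_range _

lemma bddAbove_sPlus {n : ℕ} (y : Fin n → ℝ) :
    BddAbove ((fun z => signChanges (List.ofFn z)) '' completions y) := by
  refine ⟨n - 1, ?_⟩
  rintro a ⟨z, _, rfl⟩
  exact signChanges_le_pred z

lemma le_sPlus {n : ℕ} {y z : Fin n → ℝ} (hz : z ∈ completions y) :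
    signChanges (List.ofFn z) ≤ sPlus y :=
  le_csSup (bddAbove_sPlus y) ⟨z, hz, rfl⟩

lemma sPlus_le_of {n : ℕ} {y : Fin n → ℝ} {d : ℕ}
    (h : ∀ z ∈ completions y, signChanges (List.ofFn z) ≤ d) : sPlus y ≤ d := by
  refine csSup_le ⟨_, ⟨_, completions_nonempty y, rfl⟩⟩ ?_
  rintro a ⟨z, hz, rfl⟩
  exact h z hz

lemma sPlus_le_pred {n : ℕ} (y : Fin n → ℝ) : sPlus y ≤ n - 1 :=
  sPlus_le_of (fun z _ => signChanges_le_pred z)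

lemma key_det {n d : ℕ} {A : Matrix (Fin n) (Fin n) ℝ} {ε : ℝ}
    (hminor : minorsSign (d+1) A ε)
    {m : ℕ} (s : ℕ → Fin n) (val : ℕ → ℝ) (g : ℕ → ℕ)
    (hs : ∀ k k', k < k' → k' < m → s k < s k')
    (hval : ∀ k, k < m → 0 < val k)
    (hg : ∀ k k', k ≤ k' → k' < m → g k ≤ g k')
    (hgle : ∀ k, k < m → g k ≤ d)
    (hgsurj : ∀ t, t ≤ d → ∃ k, k < m ∧ g k = t)
    (y' : Fin n → ℝ)
    (hy' : ∀ i, y' i = ∑ k ∈ Finset.range m, A i (s k) * ((-1:ℝ)^(g k) * val k))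
    (p : Fin (d+2) → Fin n) (hp : StrictMono p)
    (τ : ℝ) (hτ : τ ≠ 0) (hsgn : ∀ j : Fin (d+2), 0 ≤ τ * ((-1:ℝ)^(j:ℕ) * y' (p j))) :
    ∀ j, y' (p j) = 0 := by
  classical
  set K : Fin (d+1) → Finset ℕ := fun t => (Finset.range m).filter (fun k => g k = (t:ℕ)) with hK
  set Bm : Fin (d+2) → Fin (d+1) → ℝ := fun j t => ∑ k ∈ K t, A (p j) (s k) * val k with hBm
  have hKmem : ∀ (t : Fin (d+1)) (k : ℕ), k ∈ K t ↔ k < m ∧ g k = (t : ℕ) := by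
    intro t k; simp [hK]
  -- fibration of the sum
  have hcol : ∀ j : Fin (d+2), y' (p j) = ∑ t : Fin (d+1), (-1:ℝ)^(t:ℕ) * Bm j t := by
    intro j
    rw [hy']
    have hfw := Finset.sum_fiberwise (Finset.range m)
      (fun k => (⟨min (g k) d, by omega⟩ : Fin (d+1)))
      (fun k => A (p j) (s k) * ((-1:ℝ)^(g k) * val k))
    rw [← hfw]
    apply Finset.sum_congr rfl
    intro t _
    have hfib : (Finset.range m).filter
        (fun k => (⟨min (g k) d, by omega⟩ : Fin (d+1)) = t) = K t := by
      rw [hK]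
      apply Finset.filter_congr
      intro k hk
      rw [Finset.mem_range] at hk
      have := hgle k hk
      simp [Fin.ext_iff, Nat.min_eq_left this]
    rw [hfib, hBm, Finset.mul_sum]
    apply Finset.sum_congr rfl
    intro k hk
    have hgk : g k = (t : ℕ) := ((hKmem t k).1 hk).2
    rw [hgk]; ring
  have hKne : ∀ t : Fin (d+1), (K t).Nonempty := by
    intro t
    obtain ⟨k, hk, hgk⟩ := hgsurj (t : ℕ) (by omega)
    exact ⟨k, (hKmem t k).2 ⟨hk, hgk⟩⟩
  have hcs : ∀ (c : Fin (d+1) → ℕ), (∀ t, c t ∈ K t) → StrictMono (fun t => s (c t)) := by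
    intro c hc t t' htt'
    obtain ⟨h1, h2⟩ := (hKmem t (c t)).1 (hc t)
    obtain ⟨h1', h2'⟩ := (hKmem t' (c t')).1 (hc t')
    have hcc : c t < c t' := by
      by_contra hle
      push_neg at hle
      have h3 := hg (c t') (c t) hle h1
      have h4 : (t : ℕ) < (t' : ℕ) := htt'
      omega
    exact hs _ _ hcc h1'
  have hrowmono : ∀ i : Fin (d+2), StrictMono (fun j : Fin (d+1) => p (i.succAbove j)) :=
    fun i => hp.comp (Fin.strictMono_succAbove i)
  -- positivity of the minors of Bm
  have hdet : ∀ i : Fin (d+2),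
      0 < ε * Matrix.det (Matrix.of fun (j : Fin (d+1)) t => Bm (i.succAbove j) t) := by
    intro i
    rw [← Matrix.det_transpose]
    have hrow : (Matrix.of fun (j : Fin (d+1)) t => Bm (i.succAbove j) t)ᵀ
        = fun t => ∑ k ∈ K t, val k • (fun j => A (p (i.succAbove j)) (s k)) := by
      funext t j
      rw [Finset.sum_apply]
      simp [hBm, Matrix.transpose, mul_comm]
    have hms := Matrix.detRowAlternating.toMultilinearMap.map_sum_finset
      (fun (t : Fin (d+1)) (k : ℕ) => val k • (fun j => A (p (i.succAbove j)) (s k))) K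
    have hexp : ((Matrix.of fun (j : Fin (d+1)) t => Bm (i.succAbove j) t)ᵀ).det
        = ∑ c ∈ Fintype.piFinset K, (∏ t, val (c t)) *
            (A.submatrix (fun j => p (i.succAbove j)) (fun t => s (c t))).det := by
      rw [show ((Matrix.of fun (j : Fin (d+1)) t => Bm (i.succAbove j) t)ᵀ).det
          = Matrix.detRowAlternating ((Matrix.of fun (j : Fin (d+1)) t => Bm (i.succAbove j) t)ᵀ) from rfl]
      rw [hrow]
      rw [show (Matrix.detRowAlternating
            (fun t => ∑ k ∈ K t, val k • (fun j => A (p (i.succAbove j)) (s k))) : ℝ)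
          = Matrix.detRowAlternating.toMultilinearMap
            (fun t => ∑ k ∈ K t, val k • (fun j => A (p (i.succAbove j)) (s k))) from rfl]
      rw [hms]
      apply Finset.sum_congr rfl
      intro c _
      have hsm := Matrix.detRowAlternating.toMultilinearMap.map_smul_univ
        (fun t => val (c t)) (fun t => (fun j => A (p (i.succAbove j)) (s (c t))))
      rw [show (Matrix.detRowAlternating.toMultilinearMap
            (fun t => val (c t) • (fun j => A (p (i.succAbove j)) (s (c t)))) : ℝ)
          = Matrix.detRowAlternating.toMultilinearMap
            (fun t => (fun t => val (c t)) t • (fun t => (fun j => A (p (i.succAbove j)) (s (c t)))) t) from rfl]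
      rw [hsm]
      rw [show (Matrix.detRowAlternating.toMultilinearMap
            (fun t => (fun j => A (p (i.succAbove j)) (s (c t)))) : ℝ)
          = ((A.submatrix (fun j => p (i.succAbove j)) (fun t => s (c t)))ᵀ).det from rfl]
      rw [Matrix.det_transpose, smul_eq_mul]
    rw [hexp, Finset.mul_sum]
    apply Finset.sum_pos
    · intro c hc
      rw [Fintype.mem_piFinset] at hc
      have hpos : 0 < ∏ t, val (c t) := by
        apply Finset.prod_pos
        intro t _
        exact hval _ ((hKmem t (c t)).1 (hc t)).1
      have hm := hminor _ _ (hrowmono i) (hcs c hc)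
      calc (0:ℝ) < (∏ t, val (c t)) * (ε * (A.submatrix (fun j => p (i.succAbove j)) (fun t => s (c t))).det) :=
            mul_pos hpos hm
        _ = ε * ((∏ t, val (c t)) * (A.submatrix (fun j => p (i.succAbove j)) (fun t => s (c t))).det) := by ring
    · rw [Fintype.piFinset_nonempty]
      exact hKne
  -- the singular square matrix
  set C : Matrix (Fin (d+2)) (Fin (d+2)) ℝ :=
    Matrix.of (fun j r => Fin.cases (y' (p j)) (fun t => Bm j t) r) with hC
  have hdetC : C.det = 0 := by
    rw [← Matrix.det_transpose]
    set M : Fin (d+2) → Fin (d+2) → ℝ := fun i j => Cᵀ i j with hM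
    rw [show Cᵀ.det = Matrix.detRowAlternating M from rfl]
    have h1 : M = Function.update M 0 (∑ t : Fin (d+1), ((-1:ℝ)^(t:ℕ)) • M (Fin.succ t)) := by
      rw [eq_comm, Function.update_eq_self_iff]
      funext j
      rw [Finset.sum_apply]
      have h2 : M 0 j = y' (p j) := rfl
      rw [h2, hcol j]
      apply Finset.sum_congr rfl
      intro t _
      rfl
    rw [h1, AlternatingMap.map_update_sum]
    apply Finset.sum_eq_zero
    intro t _
    rw [AlternatingMap.map_update_smul]
    rw [AlternatingMap.map_eq_zero_of_eq Matrix.detRowAlternating _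
      (show (Function.update M 0 (M (Fin.succ t))) 0 = (Function.update M 0 (M (Fin.succ t))) (Fin.succ t) by
        rw [Function.update_self, Function.update_of_ne (Fin.succ_ne_zero t)])
      (Fin.succ_ne_zero t).symm]
    rw [smul_zero]
  -- cofactor expansion
  have hexpC : C.det = ∑ i : Fin (d+2), (-1:ℝ)^(i:ℕ) * y' (p i) *
      Matrix.det (Matrix.of fun (j : Fin (d+1)) t => Bm (i.succAbove j) t) := by
    rw [Matrix.det_succ_column_zero]
    apply Finset.sum_congr rfl
    intro i _
    have h2 : C.submatrix i.succAbove Fin.succ = Matrix.of fun (j : Fin (d+1)) t => Bm (i.succAbove j) t := by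
      ext j t
      simp [hC, Matrix.submatrix_apply]
    rw [h2]
    rfl
  -- combine
  have hsum0 : ∑ i : Fin (d+2), (τ * ((-1:ℝ)^(i:ℕ) * y' (p i))) *
      (ε * Matrix.det (Matrix.of fun (j : Fin (d+1)) t => Bm (i.succAbove j) t)) = 0 := by
    have h3 : ∑ i : Fin (d+2), (τ * ((-1:ℝ)^(i:ℕ) * y' (p i))) *
        (ε * Matrix.det (Matrix.of fun (j : Fin (d+1)) t => Bm (i.succAbove j) t))
        = (τ * ε) * C.det := by
      rw [hexpC, Finset.mul_sum]
      apply Finset.sum_congr rfl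
      intro i _
      ring
    rw [h3, hdetC, mul_zero]
  have hterm := (Finset.sum_eq_zero_iff_of_nonneg
    (fun i _ => mul_nonneg (hsgn i) (le_of_lt (hdet i)))).1 hsum0
  intro j
  have h := hterm j (Finset.mem_univ j)
  rcases mul_eq_zero.1 h with h4 | h4
  · rcases mul_eq_zero.1 h4 with h5 | h5
    · exact absurd h5 hτ
    · rcases mul_eq_zero.1 h5 with h6 | h6
      · exact absurd h6 (by positivity)
      · exact h6
  · exact absurd h4 (ne_of_gt (hdet j))

lemma vd {n : ℕ} (hn : 0 < n) {A : Matrix (Fin n) (Fin n) ℝ}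
    (hA : ∀ k, 1 ≤ k → k ≤ n → IsSSR k A) {x : Fin n → ℝ} (hx : x ≠ 0) :
    sPlus (A.mulVec x) ≤ sMinus x := by
  classical
  set y := A.mulVec x with hy
  set d := sMinus x with hd
  rcases le_or_gt (n - 1) d with hdn | hdn
  · exact le_trans (sPlus_le_pred y) hdn
  have hdn2 : d + 2 ≤ n := by omega
  obtain ⟨ε, hε, hminor⟩ := hA (d+1) (by omega) (by omega)
  have hAdet : A.det ≠ 0 := by
    obtain ⟨ε', hε', hm'⟩ := hA n (by omega) le_rfl
    have h2 := hm' id id strictMono_id strictMono_id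
    rw [Matrix.submatrix_id_id] at h2
    intro h
    rw [h, mul_zero] at h2
    exact lt_irrefl 0 h2
  have hyne : y ≠ 0 := fun h => hx (Matrix.eq_zero_of_mulVec_eq_zero hAdet h)
  set i0 : Fin n := ⟨0, hn⟩ with hi0
  set m := (suppList x).length with hm
  set w : ℕ → ℝ := fun k => x (sfun x i0 k) with hw
  have hm1 : 0 < m := by
    obtain ⟨i, hi⟩ : ∃ i, x i ≠ 0 := by
      by_contra h; push_neg at h; exact hx (funext h)
    obtain ⟨k, hk, _⟩ := sfun_surj i0 hi
    omega
  set W : ℕ → ℝ := fun k => if k < m then w k else 1 with hW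
  have hWne : ∀ k, W k ≠ 0 := by
    intro k
    rw [hW]; dsimp only; split
    · exact sfun_ne x i0 (by omega)
    · norm_num
  have hchg : chg W (m-1) = chg w (m-1) := by
    apply chg_congr
    intro j hj
    rw [hW]; dsimp only; rw [if_pos (by omega)]
  have hdcard : d = (chg W (m-1)).card := by
    rw [hd, sMinus_eq x i0, hchg, hw, hm]
  set g : ℕ → ℕ := fun k => cum W k with hgdef
  have hgmono : ∀ k k', k ≤ k' → k' < m → g k ≤ g k' := fun k k' h _ => cum_mono W h
  have hgle : ∀ k, k < m → g k ≤ d := by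
    intro k hk
    rw [hdcard]
    exact cum_mono W (by omega)
  have hgsurj : ∀ t, t ≤ d → ∃ k, k < m ∧ g k = t := by
    intro t ht
    obtain ⟨i, hi, hgi⟩ := attain (cum_zero W) (cum_succ_le W) (m-1) t
      (by rw [hdcard] at ht; exact ht)
    exact ⟨i, by omega, hgi⟩
  set val : ℕ → ℝ := fun k => W 0 * ((-1:ℝ)^(g k) * W k) with hvaldef
  have hvalpos : ∀ k, k < m → 0 < val k := fun k _ => sign_alt hWne k
  set y' : Fin n → ℝ := fun i => W 0 * y i with hy'def
  have hy'eq : ∀ i, y' i = ∑ k ∈ Finset.range m, A i (sfun x i0 k) * ((-1:ℝ)^(g k) * val k) := by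
    intro i
    have h1 : ∀ k ∈ Finset.range m,
        A i (sfun x i0 k) * ((-1:ℝ)^(g k) * val k)
          = W 0 * (A i (sfun x i0 k) * x (sfun x i0 k)) := by
      intro k hk
      rw [Finset.mem_range] at hk
      have hWk : W k = x (sfun x i0 k) := by
        rw [hW]; dsimp only; rw [if_pos hk, hw]
      have h2 : ((-1:ℝ)^(g k))^2 = 1 := by
        rw [← pow_mul, mul_comm, pow_mul]; norm_num
      rw [hvaldef, ← hWk]
      linear_combination (A i (sfun x i0 k) * W 0 * W k) * h2
    rw [Finset.sum_congr rfl h1, ← Finset.mul_sum]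
    show W 0 * y i = _
    congr 1
    have h3 : y i = ∑ j : Fin n, A i j * x j := by
      rw [hy]; rfl
    rw [h3]
    have h4 : ∑ j : Fin n, A i j * x j
        = ∑ j ∈ Finset.univ.filter (fun j => x j ≠ 0), A i j * x j := by
      rw [eq_comm]
      apply Finset.sum_filter_of_ne
      intro j _ hne hxj
      exact hne (by rw [hxj, mul_zero])
    rw [h4]
    rw [eq_comm]
    apply Finset.sum_bij (i := fun (k : ℕ) (hk : k ∈ Finset.range m) => sfun x i0 k)
    · intro k hk
      rw [Finset.mem_range] at hk
      simp only [Finset.mem_filter, Finset.mem_univ, true_and]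
      exact sfun_ne x i0 hk
    · intro k hk k' hk' heq
      rw [Finset.mem_range] at hk hk'
      by_contra hne
      rcases Nat.lt_or_ge k k' with h5 | h5
      · exact absurd heq (ne_of_lt (sfun_lt x i0 h5 hk'))
      · have h6 : k' < k := by omega
        exact absurd heq.symm (ne_of_lt (sfun_lt x i0 h6 hk))
    · intro j hj
      rw [Finset.mem_filter] at hj
      obtain ⟨k, hk, hsk⟩ := sfun_surj i0 hj.2
      exact ⟨k, Finset.mem_range.2 hk, hsk⟩
    · intro k hk
      rfl
  have hsmono : ∀ k k', k < k' → k' < m → sfun x i0 k < sfun x i0 k' :=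
    fun k k' h h' => sfun_lt x i0 h h'
  -- show every completion has at most d sign changes
  apply sPlus_le_of
  intro z hz
  by_contra hgt
  push_neg at hgt
  set Z : ℕ → ℝ := pad z with hZdef
  have hZne : ∀ j, Z j ≠ 0 := pad_ne (completions_ne_zero hz)
  have hcard : d + 1 ≤ cum Z (n-1) := by
    have h5 := signChanges_ofFn_eq z
    rw [← hZdef] at h5
    rw [cum]
    omega
  have hqex : ∀ t : ℕ, ∃ i, t ≤ d + 1 → (i ≤ n - 1 ∧ cum Z i = t) := by
    intro t
    by_cases ht : t ≤ d + 1
    · obtain ⟨i, h1, h2⟩ := attain (cum_zero Z) (cum_succ_le Z) (n-1) t (le_trans ht hcard)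
      exact ⟨i, fun _ => ⟨h1, h2⟩⟩
    · exact ⟨0, fun h => absurd h ht⟩
  choose q hq using hqex
  set p : Fin (d+2) → Fin n := fun t => ⟨q (t : ℕ), by
    have := (hq (t : ℕ) (by omega)).1; omega⟩ with hpdef
  have hqmono : ∀ (a b : ℕ), a ≤ d+1 → b ≤ d+1 → a < b → q a < q b := by
    intro a b ha hb hab
    by_contra hle
    push_neg at hle
    have h5 := cum_mono Z hle
    rw [(hq a ha).2, (hq b hb).2] at h5
    omega
  have hpmono : StrictMono p := by
    intro t t' htt'
    rw [hpdef]
    exact Fin.mk_lt_mk.2 (hqmono _ _ (by omega) (by omega) htt')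
  have hZp : ∀ t : Fin (d+2), 0 < Z 0 * ((-1:ℝ)^(t:ℕ) * Z (q (t:ℕ))) := by
    intro t
    have h5 := sign_alt hZne (q (t:ℕ))
    rw [(hq (t:ℕ) (by omega)).2] at h5
    exact h5
  have hZeqz : ∀ t : Fin (d+2), Z ((p t : Fin n) : ℕ) = z (p t) := by
    intro t
    rw [hZdef, pad]
    rw [dif_pos (p t).isLt]
  have hsgn : ∀ t : Fin (d+2), 0 ≤ (Z 0 * W 0) * ((-1:ℝ)^(t:ℕ) * y' (p t)) := by
    intro t
    by_cases hy0 : y (p t) = 0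
    · rw [hy'def]; dsimp only; rw [hy0, mul_zero, mul_zero, mul_zero]
    · have h6 : z (p t) = y (p t) := completions_agree hz hy0
      have h7 := hZp t
      have h8 : Z ((p t : Fin n) : ℕ) = y (p t) := by rw [hZeqz t, h6]
      have h9 : ((p t : Fin n) : ℕ) = q (t:ℕ) := rfl
      rw [h9] at h8
      rw [h8] at h7
      rw [hy'def]
      dsimp only
      have hW2 : 0 < W 0 * W 0 := mul_self_pos.2 (hWne 0)
      nlinarith [h7, hW2]
  have hkey := key_det hminor (sfun x i0) val g hsmono hvalpos hgmono hgle hgsurj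
    y' hy'eq p hpmono (Z 0 * W 0) (mul_ne_zero (hZne 0) (hWne 0)) hsgn
  have hy0 : ∀ t : Fin (d+2), y (p t) = 0 := by
    intro t
    have h5 := hkey t
    rw [hy'def] at h5
    dsimp only at h5
    rcases mul_eq_zero.1 h5 with h6 | h6
    · exact absurd h6 (hWne 0)
    · exact h6
  obtain ⟨q0, hq0⟩ : ∃ i, y i ≠ 0 := by
    by_contra h; push_neg at h; exact hyne (funext h)
  have hq0ne : ∀ t, q0 ≠ p t := by
    intro t heq
    exact hq0 (by rw [heq]; exact hy0 t)
  -- find replacement slot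
  have hrepl : ∃ j0 : Fin (d+2), (∀ t, t < j0 → p t < q0) ∧ (∀ t, j0 < t → q0 < p t) := by
    by_cases hcase : ∃ t : Fin (d+2), p t < q0
    · set S := Finset.univ.filter (fun t : Fin (d+2) => p t < q0) with hS
      have hSne : S.Nonempty := by
        obtain ⟨t, ht⟩ := hcase
        exact ⟨t, by simp [hS, ht]⟩
      set j0 := S.max' hSne with hj0
      have hj0mem : p j0 < q0 := by
        have h5 : j0 ∈ S := S.max'_mem hSne
        exact (Finset.mem_filter.1 h5).2
      refine ⟨j0, ?_, ?_⟩
      · intro t ht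
        exact lt_trans (hpmono ht) hj0mem
      · intro t ht
        have h5 : ¬ (p t < q0) := by
          intro hc
          have : t ∈ S := by simp [hS, hc]
          exact absurd (S.le_max' t this) (not_le.2 ht)
        rcases lt_or_eq_of_le (not_lt.1 h5) with h6 | h6
        · exact h6
        · exact absurd h6 (hq0ne t)
    · push_neg at hcase
      refine ⟨0, ?_, ?_⟩
      · intro t ht
        exact absurd ht (Fin.not_lt_zero t)
      · intro t _
        rcases lt_or_eq_of_le (hcase t) with h6 | h6
        · exact h6
        · exact absurd h6 (hq0ne t)
  obtain ⟨j0, hj0lt, hj0gt⟩ := hrepl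
  set p' : Fin (d+2) → Fin n := Function.update p j0 q0 with hp'
  have hp'mono : StrictMono p' := by
    intro a b hab
    rw [hp']
    by_cases ha : a = j0
    · subst ha
      rw [Function.update_self, Function.update_of_ne (ne_of_gt hab)]
      exact hj0gt b hab
    · by_cases hb : b = j0
      · subst hb
        rw [Function.update_self, Function.update_of_ne ha]
        exact hj0lt a hab
      · rw [Function.update_of_ne ha, Function.update_of_ne hb]
        exact hpmono hab
  set τ' : ℝ := y q0 * (-1:ℝ)^(j0:ℕ) * W 0 with hτ'
  have hτ'ne : τ' ≠ 0 := by
    rw [hτ']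
    exact mul_ne_zero (mul_ne_zero hq0 (by positivity)) (hWne 0)
  have hsgn' : ∀ t : Fin (d+2), 0 ≤ τ' * ((-1:ℝ)^(t:ℕ) * y' (p' t)) := by
    intro t
    by_cases ht : t = j0
    · subst ht
      rw [hp', Function.update_self, hy'def]
      dsimp only
      have h5 : τ' * ((-1:ℝ)^(t:ℕ) * (W 0 * y q0)) = (y q0 * (-1:ℝ)^(t:ℕ) * W 0)^2 := by
        rw [hτ']; ring
      rw [h5]
      exact sq_nonneg _
    · rw [hp', Function.update_of_ne ht, hy'def]
      dsimp only
      rw [hy0 t, mul_zero, mul_zero, mul_zero]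
  have hkey' := key_det hminor (sfun x i0) val g hsmono hvalpos hgmono hgle hgsurj
    y' hy'eq p' hp'mono τ' hτ'ne hsgn'
  have h5 := hkey' j0
  rw [hp', Function.update_self, hy'def] at h5
  dsimp only at h5
  rcases mul_eq_zero.1 h5 with h6 | h6
  · exact hWne 0 h6
  · exact hq0 h6

lemma sMinus_le_sPlus {n : ℕ} (y : Fin n → ℝ) : sMinus y ≤ sPlus y := by
  classical
  rcases Nat.eq_zero_or_pos n with hn | hn
  · have h0 : sMinus y = 0 := by
      subst hn
      simp [sMinus, signChanges]
    omega
  set i0 : Fin n := ⟨0, hn⟩ with hi0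
  set z : Fin n → ℝ := fun i => if y i = 0 then (1:ℝ) else y i with hzdef
  have hz : z ∈ completions y := completions_nonempty y
  refine le_trans ?_ (le_sPlus hz)
  rw [sMinus_eq y i0, signChanges_ofFn_eq]
  set m := (suppList y).length with hm
  set w : ℕ → ℝ := fun k => y (sfun y i0 k) with hw
  set Z : ℕ → ℝ := pad z with hZdef
  have hZne : ∀ j, Z j ≠ 0 := pad_ne (completions_ne_zero hz)
  have hex : ∀ k ∈ chg w (m-1), ∃ j, j ∈ chg Z (n-1) ∧
      ((sfun y i0 k : Fin n) : ℕ) ≤ j ∧ j + 1 ≤ ((sfun y i0 (k+1) : Fin n) : ℕ) := by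
    intro k hk
    rw [mem_chg] at hk
    obtain ⟨hk1, hk2⟩ := hk
    have hklt : k < m := by omega
    have hk1lt : k + 1 < m := by omega
    have hab : ((sfun y i0 k : Fin n) : ℕ) < ((sfun y i0 (k+1) : Fin n) : ℕ) :=
      sfun_lt y i0 (by omega) hk1lt
    have hZend : ∀ k', k' < m → Z ((sfun y i0 k' : Fin n) : ℕ) = w k' := by
      intro k' hk'
      rw [hZdef, pad, dif_pos (sfun y i0 k').isLt]
      have h5 : y (sfun y i0 k') ≠ 0 := sfun_ne y i0 hk'
      have h6 : (⟨((sfun y i0 k' : Fin n) : ℕ), (sfun y i0 k').isLt⟩ : Fin n) = sfun y i0 k' :=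
        Fin.eta _ _
      rw [h6]
      rw [hw]
      exact completions_agree hz h5
    by_contra hno
    push_neg at hno
    have hpos := pos_of_no_chg hZne (le_of_lt hab) (by
      intro j hj1 hj2 hneg
      have h7 := (sfun y i0 (k+1)).isLt
      have h8 := hno j (by rw [mem_chg]; exact ⟨by omega, hneg⟩) hj1
      omega)
    rw [hZend k hklt, hZend (k+1) hk1lt] at hpos
    linarith
  choose F hF1 hF2 hF3 using hex
  apply Finset.card_le_card_of_injOn (fun k => if h : k ∈ chg w (m-1) then F k h else 0)
  · intro k hk
    simp only [Finset.mem_coe] at hk ⊢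
    rw [dif_pos hk]
    exact hF1 k hk
  · intro k hk k' hk' heq
    simp only [Finset.mem_coe] at hk hk'
    dsimp only at heq
    rw [dif_pos hk, dif_pos hk'] at heq
    by_contra hne
    have hwlog : ∀ a b (ha : a ∈ chg w (m-1)) (hb : b ∈ chg w (m-1)), a < b → F a ha < F b hb := by
      intro a b ha hb hab
      have h1 := hF3 a ha
      have h2 := hF2 b hb
      have hale : a + 1 ≤ b := by omega
      have h3 : ((sfun y i0 (a+1) : Fin n) : ℕ) ≤ ((sfun y i0 b : Fin n) : ℕ) := by
        rcases lt_or_eq_of_le hale with h4 | h4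
        · have hblt : b < m := by
            rw [mem_chg] at hb; omega
          exact le_of_lt (sfun_lt y i0 h4 hblt)
        · rw [h4]
      omega
    rcases Nat.lt_or_ge k k' with h5 | h5
    · exact absurd heq (ne_of_lt (hwlog k k' hk hk' h5))
    · have h6 : k' < k := by omega
      exact absurd heq.symm (ne_of_lt (hwlog k' k hk' hk h6))

end SSRAux

open SSRAux in
theorem stmt18 {n : ℕ} (A : ℕ → Matrix (Fin n) (Fin n) ℝ)
    (hA : ∀ i, ∀ k, 1 ≤ k → k ≤ n → IsSSR k (A i))
    (x : ℕ → Fin n → ℝ) (hx : ∀ i, x (i + 1) = (A i).mulVec (x i))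
    (h0 : x 0 ≠ 0) :
    (∀ i, sPlus (x (i + 1)) ≤ sMinus (x i)) ∧
    (∀ i, sPlus (x (i + 1)) ≤ sPlus (x i) ∧ sMinus (x (i + 1)) ≤ sMinus (x i)) ∧
    {i : ℕ | sMinus (x i) < sPlus (x i)}.Finite ∧
    {i : ℕ | sMinus (x i) < sPlus (x i)}.ncard ≤ n - 1 := by
  classical
  rcases Nat.eq_zero_or_pos n with hn | hn
  · exfalso
    apply h0
    subst hn
    funext i
    exact absurd i.isLt (by omega)
  -- all iterates are nonzero
  have hAdet : ∀ i, (A i).det ≠ 0 := by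
    intro i
    obtain ⟨ε', hε', hm'⟩ := hA i n (by omega) le_rfl
    have h2 := hm' id id strictMono_id strictMono_id
    rw [Matrix.submatrix_id_id] at h2
    intro h
    rw [h, mul_zero] at h2
    exact lt_irrefl 0 h2
  have hxn : ∀ i, x i ≠ 0 := by
    intro i
    induction i with
    | zero => exact h0
    | succ i ih =>
      rw [hx i]
      intro h
      exact ih (Matrix.eq_zero_of_mulVec_eq_zero (hAdet i) h)
  have H1 : ∀ i, sPlus (x (i + 1)) ≤ sMinus (x i) := by
    intro i
    rw [hx i]
    exact vd hn (hA i) (hxn i)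
  have H2 : ∀ i, sPlus (x (i + 1)) ≤ sPlus (x i) ∧ sMinus (x (i + 1)) ≤ sMinus (x i) := by
    intro i
    constructor
    · exact le_trans (H1 i) (sMinus_le_sPlus (x i))
    · exact le_trans (sMinus_le_sPlus (x (i+1))) (H1 i)
  refine ⟨H1, H2, ?_⟩
  set S : Set ℕ := {i : ℕ | sMinus (x i) < sPlus (x i)} with hS
  set f : ℕ → ℕ := fun i => sPlus (x (i+1)) with hf
  have hmono : ∀ i j, i ≤ j → sPlus (x j) ≤ sPlus (x i) := by
    intro i j hij
    induction j with
    | zero => rw [Nat.le_zero.1 hij]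
    | succ j ih =>
      rcases Nat.lt_or_ge i (j+1) with h1 | h1
      · exact le_trans (le_trans (H1 j) (sMinus_le_sPlus (x j))) (ih (by omega))
      · rw [le_antisymm hij h1]
  have hdrop : ∀ i ∈ S, f i < sPlus (x i) := by
    intro i hi
    rw [hS] at hi
    exact lt_of_le_of_lt (H1 i) hi
  have hinj : Set.InjOn f S := by
    intro a ha b hb heq
    by_contra hne
    have hwlog : ∀ a b, a ∈ S → b ∈ S → a < b → f b < f a := by
      intro a b ha' hb' hab
      calc f b < sPlus (x b) := hdrop b hb'
        _ ≤ sPlus (x (a+1)) := hmono (a+1) b (by omega)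
        _ = f a := rfl
    rcases Nat.lt_or_ge a b with h1 | h1
    · exact absurd heq.symm (ne_of_lt (hwlog a b ha hb h1))
    · have h2 : b < a := by omega
      exact absurd heq (ne_of_lt (hwlog b a hb ha h2))
  have hsub : f '' S ⊆ ↑(Finset.range (sPlus (x 0))) := by
    rintro v ⟨i, hi, rfl⟩
    simp only [Finset.coe_range, Set.mem_Iio]
    exact lt_of_lt_of_le (hdrop i hi) (hmono 0 i (by omega))
  have hfin : S.Finite := by
    apply Set.Finite.of_finite_image _ hinj
    exact Set.Finite.subset (Finset.range (sPlus (x 0))).finite_toSet hsub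
  refine ⟨hfin, ?_⟩
  calc S.ncard = (f '' S).ncard := (Set.ncard_image_of_injOn hinj).symm
    _ ≤ (↑(Finset.range (sPlus (x 0))) : Set ℕ).ncard :=
        Set.ncard_le_ncard hsub (Finset.range (sPlus (x 0))).finite_toSet
    _ = sPlus (x 0) := by rw [Set.ncard_coe_finset, Finset.card_range]
    _ ≤ n - 1 := sPlus_le_pred (x 0)
end
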